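/- arXiv:funct-an/9712004 — 9 statements merged into one kernel-verified Lean document; each statement's English description precedes it below -/
import Mathlib

section
/- Let M : ℂ₊ → M_n(ℂ) be an n×n matrix-valued Herglotz function. Then the kernel of Im(M(z)) (as a subspace of ℂⁿ) is independent of z ∈ ℂ₊; in particular, the rank of Im(M(z)) is the same for all z ∈ ℂ₊. -/
/-!
For a fixed vector `x`, `f z = x* M(z) x` is holomorphic on the upper half-plane with
`Im f z = x* Im(M z) x ≥ 0`. If `Im(M z₀) x = 0`, then `Im f` attains its minimum `0` at `z₀`;
the maximum modulus principle applied to `exp (i f)`, whose modulus is `exp (-Im f)`, forces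
`Im f ≡ 0`, and for a positive semidefinite matrix `P` the vanishing of `x* P x` means `P x = 0`.
Equal kernels then give equal ranks by rank–nullity.
-/

open Matrix
open scoped ComplexOrder

/-- The "imaginary part" `(M - M*)/(2i)` of a complex square matrix. -/
noncomputable def matIm {n : ℕ} (M : Matrix (Fin n) (Fin n) ℂ) : Matrix (Fin n) (Fin n) ℂ :=
  (2 * Complex.I)⁻¹ • (M - Mᴴ)

open Set Function in
theorem Complex.eqOn_im_of_isMinOn_im {E : Type*} [NormedAddCommGroup E] [NormedSpace ℂ E]
    {f : E → ℂ} {U : Set E} {c : E} (hc : IsPreconnected U) (ho : IsOpen U)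
    (hd : DifferentiableOn ℂ f U) (hcU : c ∈ U) (hm : IsMinOn (im ∘ f) U c) :
    EqOn (im ∘ f) (const E (f c).im) U := by
  have hnorm (x : E) : ‖exp (I * f x)‖ = Real.exp (-(f x).im) := by simp [norm_exp]
  have hmax : IsMaxOn (norm ∘ fun x => exp (I * f x)) U c := fun x hx => by
    simpa [hnorm] using hm hx
  intro x hx
  simpa [hnorm] using norm_eqOn_of_isPreconnected_of_isMaxOn hc ho
    ((differentiableOn_const I).mul hd).cexp hcU hmax hx

theorem DifferentiableOn.dotProduct_mulVec {ι 𝕜 E : Type*} [Fintype ι]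
    [NontriviallyNormedField 𝕜] [NormedAddCommGroup E] [NormedSpace 𝕜 E]
    {M : E → Matrix ι ι 𝕜} {s : Set E} (hM : ∀ i j, DifferentiableOn 𝕜 (fun z => M z i j) s)
    (x y : ι → 𝕜) : DifferentiableOn 𝕜 (fun z => x ⬝ᵥ M z *ᵥ y) s := by
  simp only [dotProduct, mulVec, Finset.mul_sum]
  fun_prop

theorem Matrix.rank_eq_of_forall_mulVec_eq_zero_iff {m n K : Type*} [Fintype m] [Fintype n]
    [Field K] {A B : Matrix m n K} (h : ∀ x, A *ᵥ x = 0 ↔ B *ᵥ x = 0) : A.rank = B.rank := by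
  have hker : LinearMap.ker A.mulVecLin = LinearMap.ker B.mulVecLin := by
    ext x
    exact h x
  have hA := LinearMap.finrank_range_add_finrank_ker A.mulVecLin
  have hB := LinearMap.finrank_range_add_finrank_ker B.mulVecLin
  rw [hker] at hA
  rw [Matrix.rank, Matrix.rank]
  omega

theorem dotProduct_matIm_mulVec {n : ℕ} (A : Matrix (Fin n) (Fin n) ℂ) (x : Fin n → ℂ) :
    star x ⬝ᵥ matIm A *ᵥ x = ((star x ⬝ᵥ A *ᵥ x).im : ℂ) := by
  have hconj : star x ⬝ᵥ Aᴴ *ᵥ x = star (star x ⬝ᵥ A *ᵥ x) := by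
    rw [star_dotProduct, star_mulVec, conjTranspose_conjTranspose, ← dotProduct_mulVec]
  rw [matIm, smul_mulVec, dotProduct_smul, sub_mulVec, dotProduct_sub, hconj,
    Complex.star_def, Complex.sub_conj, smul_eq_mul]
  field_simp
  push_cast
  ring

theorem matIm_mulVec_eq_zero_of_herglotz {n : ℕ} {M : ℂ → Matrix (Fin n) (Fin n) ℂ}
    (hanal : ∀ i j : Fin n, DifferentiableOn ℂ (fun z => M z i j) {z : ℂ | 0 < z.im})
    (hpos : ∀ z : ℂ, 0 < z.im → (matIm (M z)).PosSemidef)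
    {z w : ℂ} (hz : 0 < z.im) (hw : 0 < w.im) {x : Fin n → ℂ}
    (hx : matIm (M z) *ᵥ x = 0) : matIm (M w) *ᵥ x = 0 := by
  set F : ℂ → ℂ := fun ζ => star x ⬝ᵥ M ζ *ᵥ x
  have him_nonneg : ∀ ζ, 0 < ζ.im → 0 ≤ (F ζ).im := fun ζ hζ => by
    simpa [dotProduct_matIm_mulVec] using (hpos ζ hζ).dotProduct_mulVec_nonneg x
  have him_z : (F z).im = 0 := by
    have h := dotProduct_matIm_mulVec (M z) x
    rw [hx, dotProduct_zero] at h
    exact_mod_cast h.symm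
  have him_w : (F w).im = 0 := by
    have hmin : IsMinOn (Complex.im ∘ F) {ζ | 0 < ζ.im} z := fun ζ hζ => by
      simpa [him_z] using him_nonneg ζ hζ
    rw [← him_z]
    exact Complex.eqOn_im_of_isMinOn_im (convex_halfSpace_im_gt 0).isPreconnected
      (isOpen_lt continuous_const Complex.continuous_im)
      (DifferentiableOn.dotProduct_mulVec hanal _ _) hz hmin hw
  rw [← (hpos w hw).dotProduct_mulVec_zero_iff, dotProduct_matIm_mulVec]
  exact_mod_cast him_w

/-- For a matrix-valued Herglotz function `M`, the kernel of `Im (M z)` is independent of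
`z` in the open upper half-plane; in particular the rank of `Im (M z)` is constant there. -/
theorem kernel_im_herglotz_matrix_independent {n : ℕ}
    (M : ℂ → Matrix (Fin n) (Fin n) ℂ)
    (hanal : ∀ i j : Fin n, DifferentiableOn ℂ (fun z => M z i j) {z : ℂ | 0 < z.im})
    (hpos : ∀ z : ℂ, 0 < z.im → (matIm (M z)).PosSemidef) :
    ∀ z w : ℂ, 0 < z.im → 0 < w.im →
      (∀ x : Fin n → ℂ, matIm (M z) *ᵥ x = 0 ↔ matIm (M w) *ᵥ x = 0) ∧
        (matIm (M z)).rank = (matIm (M w)).rank := by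
  intro z w hz hw
  have hker (x : Fin n → ℂ) : matIm (M z) *ᵥ x = 0 ↔ matIm (M w) *ᵥ x = 0 :=
    ⟨matIm_mulVec_eq_zero_of_herglotz hanal hpos hz hw,
      matIm_mulVec_eq_zero_of_herglotz hanal hpos hw hz⟩
  exact ⟨hker, rank_eq_of_forall_mulVec_eq_zero_iff hker⟩
end

section
/- Let A = (A_{p,q})_{1≤p,q≤2} ∈ 𝒜_{2n} and let M ∈ M_n(ℂ) satisfy Im(M) positive semidefinite. Then every x ∈ ℂⁿ with (A_{1,1} + A_{1,2}M)x = 0 satisfies Im(M)x = 0, i.e., ker(A_{1,1} + A_{1,2}M) ⊆ ker(Im(M)). In particular, if Im(M) is positive definite, then the matrix A_{1,1} + A_{1,2}M is invertible. -/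
/-!
For `u = (x, M x)` the form `u* J u` equals `-2i · x* Im(M) x`.
Since `A* J A = J`, it also equals `(A u)* J (A u)`, and when `(A₁₁ + A₁₂ M) x = 0` the vector
`A u` has vanishing first block, on which the form is zero. Hence `x* Im(M) x = 0`, and positive
semidefiniteness of `Im(M)` forces `Im(M) x = 0`.
-/

open Matrix
open scoped ComplexOrder

/-- The matrix `J_{2n} = ((0, -I_n), (I_n, 0))`. -/
def J2n (n : ℕ) : Matrix (Fin n ⊕ Fin n) (Fin n ⊕ Fin n) ℂ :=
  Matrix.fromBlocks 0 (-1) 1 0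

theorem Matrix.star_dotProduct_conjTranspose_mul_mul_mulVec {ι α : Type*} [Fintype ι]
    [CommSemiring α] [StarRing α] (A J : Matrix ι ι α) (u : ι → α) :
    star u ⬝ᵥ ((Aᴴ * J * A) *ᵥ u) = star (A *ᵥ u) ⬝ᵥ (J *ᵥ (A *ᵥ u)) := by
  rw [← mulVec_mulVec, ← mulVec_mulVec, dotProduct_mulVec, ← star_mulVec]

theorem Matrix.isUnit_of_forall_mulVec_eq_zero {ι K : Type*} [Fintype ι] [DecidableEq ι]
    [Field K] {B P : Matrix ι ι K} (hP : IsUnit P) (h : ∀ x, B *ᵥ x = 0 → P *ᵥ x = 0) :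
    IsUnit B := by
  rw [← mulVec_injective_iff_isUnit] at hP ⊢
  exact (injective_iff_map_eq_zero B.mulVecLin).mpr fun x hx =>
    hP ((h x hx).trans (mulVec_zero P).symm)

theorem Matrix.fromBlocks_mulVec_sumElim_mulVec {m n α : Type*} [Fintype m] [Fintype n]
    [NonUnitalSemiring α] (A11 : Matrix m m α) (A12 : Matrix m n α) (A21 : Matrix n m α)
    (A22 : Matrix n n α) (M : Matrix n m α) (x : m → α) :
    fromBlocks A11 A12 A21 A22 *ᵥ Sum.elim x (M *ᵥ x) =
      Sum.elim ((A11 + A12 * M) *ᵥ x) ((A21 + A22 * M) *ᵥ x) := by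
  simp only [fromBlocks_mulVec, Sum.elim_comp_inl, Sum.elim_comp_inr, add_mulVec, mulVec_mulVec]

theorem star_dotProduct_J2n_mulVec_sumElim {n : ℕ} (a b : Fin n → ℂ) :
    star (Sum.elim a b) ⬝ᵥ (J2n n *ᵥ Sum.elim a b) = star b ⬝ᵥ a - star a ⬝ᵥ b := by
  simp only [J2n, fromBlocks_mulVec, Function.star_sumElim, sumElim_dotProduct_sumElim,
    Sum.elim_comp_inl, Sum.elim_comp_inr, zero_mulVec, one_mulVec, neg_mulVec, zero_add, add_zero,
    dotProduct_neg, neg_add_eq_sub]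

theorem star_dotProduct_matIm_mulVec {n : ℕ} (M : Matrix (Fin n) (Fin n) ℂ) (x : Fin n → ℂ) :
    star x ⬝ᵥ (matIm M *ᵥ x) = (2 * Complex.I)⁻¹ * (star x ⬝ᵥ (M *ᵥ x) - star (M *ᵥ x) ⬝ᵥ x) := by
  rw [matIm, smul_mulVec, dotProduct_smul, sub_mulVec, dotProduct_sub, star_mulVec,
    ← dotProduct_mulVec, smul_eq_mul]

theorem star_dotProduct_matIm_mulVec_eq_zero {n : ℕ}
    {A11 A12 A21 A22 M : Matrix (Fin n) (Fin n) ℂ}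
    (hA : (fromBlocks A11 A12 A21 A22)ᴴ * J2n n * fromBlocks A11 A12 A21 A22 = J2n n)
    {x : Fin n → ℂ} (hx : (A11 + A12 * M) *ᵥ x = 0) :
    star x ⬝ᵥ (matIm M *ᵥ x) = 0 := by
  set u : Fin n ⊕ Fin n → ℂ := Sum.elim x (M *ᵥ x)
  have hform : star u ⬝ᵥ (J2n n *ᵥ u) = 0 := by
    rw [← hA, star_dotProduct_conjTranspose_mul_mul_mulVec, fromBlocks_mulVec_sumElim_mulVec, hx,
      star_dotProduct_J2n_mulVec_sumElim, star_zero, zero_dotProduct, dotProduct_zero, sub_zero]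
  rw [star_dotProduct_J2n_mulVec_sumElim] at hform
  rw [star_dotProduct_matIm_mulVec, ← neg_sub, hform, neg_zero, mul_zero]

/-- If `A = (A_{p,q}) ∈ 𝒜_{2n}` and `Im M ≥ 0`, then
`ker (A₁₁ + A₁₂ M) ⊆ ker (Im M)`; in particular if `Im M > 0` then
`A₁₁ + A₁₂ M` is invertible. -/
theorem kernel_subset_kernel_im {n : ℕ}
    (A11 A12 A21 A22 M : Matrix (Fin n) (Fin n) ℂ)
    (hA : (Matrix.fromBlocks A11 A12 A21 A22)ᴴ * J2n n * Matrix.fromBlocks A11 A12 A21 A22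
      = J2n n)
    (hM : (matIm M).PosSemidef) :
    (∀ x : Fin n → ℂ, (A11 + A12 * M) *ᵥ x = 0 → matIm M *ᵥ x = 0) ∧
      ((matIm M).PosDef → IsUnit (A11 + A12 * M)) := by
  have hker : ∀ x : Fin n → ℂ, (A11 + A12 * M) *ᵥ x = 0 → matIm M *ᵥ x = 0 := fun x hx =>
    (hM.dotProduct_mulVec_zero_iff x).mp (star_dotProduct_matIm_mulVec_eq_zero hA hx)
  exact ⟨hker, fun hPD => isUnit_of_forall_mulVec_eq_zero hPD.isUnit hker⟩
end

section
/- Let A = (A_{p,q})_{1≤p,q≤2} ∈ 𝒜_{2n}, let M ∈ M_n(ℂ) with A_{1,1} + A_{1,2}M invertible, and set M_A = (A_{2,1} + A_{2,2}M)(A_{1,1} + A_{1,2}M)⁻¹. Then Im(M_A) = ((A_{1,1} + A_{1,2}M)⁻¹)* · Im(M) · (A_{1,1} + A_{1,2}M)⁻¹. -/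
open Matrix
open scoped ComplexOrder

/-!
Write `B = A₁₁ + A₁₂ M` and `C = A₂₁ + A₂₂ M`, so that `A (I; M) = (B; C)`. The sesquilinear
form `X ↦ X* J X` sends `(B; C)` to `C* B - B* C`, and `A* J A = J` makes it invariant under `A`;
hence `B* C - C* B = M - M*`. Conjugating by `B⁻¹` turns the left side into
`C B⁻¹ - (C B⁻¹)*`, i.e. `2i Im(M_A)`.
-/

namespace Matrix

variable {R m n : Type*} [CommRing R] [StarRing R] [Fintype m] [DecidableEq m]

theorem conjTranspose_fromRows_mul_J_mul_fromRows (B C : Matrix m n R) :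
    (fromRows B C)ᴴ * J m R * fromRows B C = Cᴴ * B - Bᴴ * C := by
  rw [J, conjTranspose_fromRows_eq_fromCols_conjTranspose, fromCols_mul_fromBlocks,
    fromCols_mul_fromRows]
  simp only [Matrix.mul_zero, Matrix.mul_one, Matrix.mul_neg, zero_add, add_zero, Matrix.neg_mul]
  abel

theorem conjTranspose_mul_sub_conjTranspose_mul_eq_of_J_invariant
    {A₁₁ A₁₂ A₂₁ A₂₂ : Matrix m m R} (M : Matrix m m R)
    (hA : (fromBlocks A₁₁ A₁₂ A₂₁ A₂₂)ᴴ * J m R * fromBlocks A₁₁ A₁₂ A₂₁ A₂₂ = J m R) :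
    (A₁₁ + A₁₂ * M)ᴴ * (A₂₁ + A₂₂ * M) - (A₂₁ + A₂₂ * M)ᴴ * (A₁₁ + A₁₂ * M) = M - Mᴴ := by
  set A := fromBlocks A₁₁ A₁₂ A₂₁ A₂₂
  set X : Matrix (m ⊕ m) m R := fromRows 1 M
  have hAX : A * X = fromRows (A₁₁ + A₁₂ * M) (A₂₁ + A₂₂ * M) := by
    rw [fromBlocks_mul_fromRows, Matrix.mul_one, Matrix.mul_one]
  have hinv : (A * X)ᴴ * J m R * (A * X) = Xᴴ * J m R * X :=
    calc (A * X)ᴴ * J m R * (A * X) = Xᴴ * (Aᴴ * J m R * A) * X := by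
          simp only [conjTranspose_mul, Matrix.mul_assoc]
      _ = Xᴴ * J m R * X := by rw [hA]
  rw [hAX, conjTranspose_fromRows_mul_J_mul_fromRows,
    conjTranspose_fromRows_mul_J_mul_fromRows] at hinv
  rw [← neg_sub, hinv, conjTranspose_one, Matrix.mul_one, Matrix.one_mul, neg_sub]

theorem mul_nonsing_inv_sub_conjTranspose
    {B : Matrix m m R} (hB : IsUnit B) (C : Matrix m m R) :
    C * B⁻¹ - (C * B⁻¹)ᴴ = (B⁻¹)ᴴ * (Bᴴ * C - Cᴴ * B) * B⁻¹ := by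
  have hBB : B * B⁻¹ = 1 := mul_nonsing_inv B ((isUnit_iff_isUnit_det B).mp hB)
  have hBB' : (B⁻¹)ᴴ * Bᴴ = 1 := by rw [← conjTranspose_mul, hBB, conjTranspose_one]
  calc C * B⁻¹ - (C * B⁻¹)ᴴ = ((B⁻¹)ᴴ * Bᴴ) * (C * B⁻¹) - (B⁻¹)ᴴ * Cᴴ * (B * B⁻¹) := by
        rw [hBB, hBB', conjTranspose_mul]; noncomm_ring
    _ = (B⁻¹)ᴴ * (Bᴴ * C - Cᴴ * B) * B⁻¹ := by noncomm_ring

end Matrix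

/-- If `A = (A_{p,q}) ∈ 𝒜_{2n}`, `A₁₁ + A₁₂ M` is invertible, and
`M_A = (A₂₁ + A₂₂ M)(A₁₁ + A₁₂ M)⁻¹`, then
`Im M_A = ((A₁₁ + A₁₂ M)⁻¹)* ⬝ Im M ⬝ (A₁₁ + A₁₂ M)⁻¹`. -/
theorem im_linear_fractional_transform {n : ℕ}
    (A11 A12 A21 A22 M : Matrix (Fin n) (Fin n) ℂ)
    (hA : (Matrix.fromBlocks A11 A12 A21 A22)ᴴ * J2n n * Matrix.fromBlocks A11 A12 A21 A22
      = J2n n)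
    (hInv : IsUnit (A11 + A12 * M)) :
    matIm ((A21 + A22 * M) * (A11 + A12 * M)⁻¹) =
      ((A11 + A12 * M)⁻¹)ᴴ * matIm M * (A11 + A12 * M)⁻¹ := by
  rw [matIm, matIm, mul_nonsing_inv_sub_conjTranspose hInv,
    conjTranspose_mul_sub_conjTranspose_mul_eq_of_J_invariant M hA,
    Matrix.mul_smul, Matrix.smul_mul]
end

section
/- Let A = (A_{p,q})_{1≤p,q≤2} ∈ 𝒜_{2n}, let M ∈ M_n(ℂ) with A_{1,1} + A_{1,2}M invertible, and set M_A = (A_{2,1} + A_{2,2}M)(A_{1,1} + A_{1,2}M)⁻¹. Then (A_{2,2}* − A_{1,2}* M_A)(A_{1,1} + A_{1,2}M) = I_n; in particular, the matrix A_{2,2}* − A_{1,2}* M_A is invertible (has trivial kernel). -/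
open Matrix
open scoped ComplexOrder

namespace Matrix

variable {m α : Type*} [Fintype m] [DecidableEq m]

theorem conjTranspose_mul_J_mul_eq_J_lower_blocks [Ring α] [StarRing α]
    {A11 A12 A21 A22 : Matrix m m α}
    (hA : (fromBlocks A11 A12 A21 A22)ᴴ * fromBlocks 0 (-1) 1 0 * fromBlocks A11 A12 A21 A22
      = fromBlocks 0 (-1) 1 0) :
    A22ᴴ * A11 - A12ᴴ * A21 = 1 ∧ A22ᴴ * A12 - A12ᴴ * A22 = 0 := by
  simp only [fromBlocks_conjTranspose, fromBlocks_multiply, fromBlocks_inj, Matrix.mul_zero,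
    Matrix.mul_one, Matrix.mul_neg, zero_add, add_zero, Matrix.neg_mul, ← sub_eq_add_neg] at hA
  exact ⟨hA.2.2.1, hA.2.2.2⟩

theorem sub_mul_mul_nonsing_inv_mul_cancel [CommRing α] (X Y N D : Matrix m m α)
    (hD : IsUnit D) : (X - Y * (N * D⁻¹)) * D = X * D - Y * N := by
  rw [Matrix.sub_mul, Matrix.mul_assoc Y, Matrix.mul_assoc, nonsing_inv_mul _
    ((isUnit_iff_isUnit_det D).mp hD), Matrix.mul_one]

end Matrix

/-- If `A = (A_{p,q}) ∈ 𝒜_{2n}`, `A₁₁ + A₁₂ M` is invertible, and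
`M_A = (A₂₁ + A₂₂ M)(A₁₁ + A₁₂ M)⁻¹`, then
`(A₂₂* - A₁₂* M_A)(A₁₁ + A₁₂ M) = I_n`; in particular `A₂₂* - A₁₂* M_A` is
invertible (has trivial kernel). -/
theorem identity_for_linear_fractional_transform {n : ℕ}
    (A11 A12 A21 A22 M : Matrix (Fin n) (Fin n) ℂ)
    (hA : (Matrix.fromBlocks A11 A12 A21 A22)ᴴ * J2n n * Matrix.fromBlocks A11 A12 A21 A22
      = J2n n)
    (hInv : IsUnit (A11 + A12 * M)) :
    (A22ᴴ - A12ᴴ * ((A21 + A22 * M) * (A11 + A12 * M)⁻¹)) * (A11 + A12 * M) = 1 ∧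
      IsUnit (A22ᴴ - A12ᴴ * ((A21 + A22 * M) * (A11 + A12 * M)⁻¹)) := by
  obtain ⟨h11, h12⟩ := conjTranspose_mul_J_mul_eq_J_lower_blocks hA
  have key : (A22ᴴ - A12ᴴ * ((A21 + A22 * M) * (A11 + A12 * M)⁻¹)) * (A11 + A12 * M) = 1 :=
    calc _ = A22ᴴ * (A11 + A12 * M) - A12ᴴ * (A21 + A22 * M) :=
          sub_mul_mul_nonsing_inv_mul_cancel _ _ _ _ hInv
      _ = (A22ᴴ * A11 - A12ᴴ * A21) + (A22ᴴ * A12 - A12ᴴ * A22) * M := by noncomm_ring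
      _ = 1 := by rw [h11, h12, Matrix.zero_mul, add_zero]
  exact ⟨key, IsUnit.of_mul_eq_one _ key⟩
end

section
/- Let A = (A_{p,q})_{1≤p,q≤2} ∈ 𝒜_{2n}, let M ∈ M_n(ℂ) with A_{1,1} + A_{1,2}M invertible, and set M_A = (A_{2,1} + A_{2,2}M)(A_{1,1} + A_{1,2}M)⁻¹. Then M = −(A_{2,1}* − A_{1,1}* M_A)(A_{2,2}* − A_{1,2}* M_A)⁻¹ and Im(M) = ((A_{2,2}* − A_{1,2}* M_A)⁻¹)* · Im(M_A) · (A_{2,2}* − A_{1,2}* M_A)⁻¹. -/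
open Matrix
open scoped ComplexOrder

/-!
With `Q = A₁₁ + A₁₂ M` and `P = A₂₁ + A₂₂ M` we have `(Q; P) = A (1; M)`, so
`A* J (Q; P) = J (1; M) = (-M; 1)`. Read row by row this says `(A₂₂* - A₁₂* M_A) Q = 1` and
`(A₂₁* - A₁₁* M_A) Q = -M`, which gives the formula for `M`. The form `X ↦ X* J X` is preserved
by `A`, so `Q* P - P* Q = M - M*`, and the left side is `Q* (M_A - M_A*) Q`.
-/

namespace Matrix

variable {m R : Type*} [Fintype m] [DecidableEq m] [CommRing R]

lemma J_mul_fromRows {k : Type*} (X Y : Matrix m k R) : J m R * fromRows X Y = fromRows (-Y) X := by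
  simp [J, fromBlocks_mul_fromRows]

lemma sub_mul_mul_inv_mul {P Q : Matrix m m R} (hQ : IsUnit Q) (X Y : Matrix m m R) :
    (X - Y * (P * Q⁻¹)) * Q = X * Q - Y * P := by
  rw [Matrix.sub_mul, Matrix.mul_assoc,
    nonsing_inv_mul_cancel_right Q _ ((isUnit_iff_isUnit_det Q).mp hQ)]

section StarRing

variable [StarRing R]

lemma conjTranspose_mul_sub_conjTranspose_mul {P Q : Matrix m m R} (hQ : IsUnit Q) :
    Qᴴ * (P * Q⁻¹ - (P * Q⁻¹)ᴴ) * Q = Qᴴ * P - Pᴴ * Q := by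
  have hQ' : IsUnit Q.det := (isUnit_iff_isUnit_det Q).mp hQ
  rw [conjTranspose_mul, Matrix.mul_sub, Matrix.sub_mul, Matrix.mul_assoc,
    nonsing_inv_mul_cancel_right Q _ hQ', ← Matrix.mul_assoc, ← conjTranspose_mul,
    nonsing_inv_mul _ hQ', conjTranspose_one, Matrix.one_mul]

/-- The set `𝒜_{2n}`. -/
def IsConjSymplectic (A : Matrix (m ⊕ m) (m ⊕ m) R) : Prop :=
  Aᴴ * J m R * A = J m R

namespace IsConjSymplectic

variable {A11 A12 A21 A22 : Matrix m m R}

lemma conjTranspose_block_identities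
    (hA : IsConjSymplectic (fromBlocks A11 A12 A21 A22)) (M : Matrix m m R) :
    A21ᴴ * (A11 + A12 * M) - A11ᴴ * (A21 + A22 * M) = -M ∧
      A22ᴴ * (A11 + A12 * M) - A12ᴴ * (A21 + A22 * M) = 1 := by
  have h := congrArg (· * fromRows (1 : Matrix m m R) M) hA
  simp only [Matrix.mul_assoc, J_mul_fromRows, fromBlocks_conjTranspose, fromBlocks_mul_fromRows,
    fromRows_inj.eq_iff] at h
  constructor
  · rw [← h.1]; noncomm_ring
  · rw [← h.2]; noncomm_ring

lemma skew_form_eq (hA : IsConjSymplectic (fromBlocks A11 A12 A21 A22)) (M : Matrix m m R) :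
    (A11 + A12 * M)ᴴ * (A21 + A22 * M) - (A21 + A22 * M)ᴴ * (A11 + A12 * M) = M - Mᴴ := by
  set A := fromBlocks A11 A12 A21 A22
  set X := fromRows (1 : Matrix m m R) M
  have hAX : A * X = fromRows (A11 + A12 * M) (A21 + A22 * M) := by
    simp [A, X, fromBlocks_mul_fromRows]
  calc (A11 + A12 * M)ᴴ * (A21 + A22 * M) - (A21 + A22 * M)ᴴ * (A11 + A12 * M)
      = -((A * X)ᴴ * (J m R * (A * X))) := by
        rw [hAX, J_mul_fromRows, conjTranspose_fromRows_eq_fromCols_conjTranspose,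
          fromCols_mul_fromRows]
        noncomm_ring
    _ = -(Xᴴ * (Aᴴ * J m R * A * X)) := by simp only [conjTranspose_mul, Matrix.mul_assoc]
    _ = -(Xᴴ * (J m R * X)) := congrArg (fun S => -(Xᴴ * (S * X))) hA
    _ = M - Mᴴ := by
        rw [J_mul_fromRows, conjTranspose_fromRows_eq_fromCols_conjTranspose,
          fromCols_mul_fromRows]
        simp only [conjTranspose_one, Matrix.mul_neg, Matrix.one_mul, Matrix.mul_one]
        abel

end IsConjSymplectic

end StarRing

end Matrix

/-- If `A = (A_{p,q}) ∈ 𝒜_{2n}`, `A₁₁ + A₁₂ M` is invertible, and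
`M_A = (A₂₁ + A₂₂ M)(A₁₁ + A₁₂ M)⁻¹`, then
`M = -(A₂₁* - A₁₁* M_A)(A₂₂* - A₁₂* M_A)⁻¹` and
`Im M = ((A₂₂* - A₁₂* M_A)⁻¹)* ⬝ Im M_A ⬝ (A₂₂* - A₁₂* M_A)⁻¹`. -/
theorem inverse_linear_fractional_transform {n : ℕ}
    (A11 A12 A21 A22 M : Matrix (Fin n) (Fin n) ℂ)
    (hA : (Matrix.fromBlocks A11 A12 A21 A22)ᴴ * J2n n * Matrix.fromBlocks A11 A12 A21 A22
      = J2n n)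
    (hInv : IsUnit (A11 + A12 * M)) :
    M = -((A21ᴴ - A11ᴴ * ((A21 + A22 * M) * (A11 + A12 * M)⁻¹)) *
        (A22ᴴ - A12ᴴ * ((A21 + A22 * M) * (A11 + A12 * M)⁻¹))⁻¹) ∧
      matIm M =
        ((A22ᴴ - A12ᴴ * ((A21 + A22 * M) * (A11 + A12 * M)⁻¹))⁻¹)ᴴ *
          matIm ((A21 + A22 * M) * (A11 + A12 * M)⁻¹) *
          (A22ᴴ - A12ᴴ * ((A21 + A22 * M) * (A11 + A12 * M)⁻¹))⁻¹ := by
  have hA' : IsConjSymplectic (fromBlocks A11 A12 A21 A22) := hA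
  obtain ⟨hT, hS⟩ := hA'.conjTranspose_block_identities M
  have hskew := hA'.skew_form_eq M
  set Q := A11 + A12 * M
  set P := A21 + A22 * M
  have hSinv : (A22ᴴ - A12ᴴ * (P * Q⁻¹))⁻¹ = Q :=
    inv_eq_right_inv (by rw [sub_mul_mul_inv_mul hInv, hS])
  refine ⟨?_, ?_⟩
  · rw [hSinv, sub_mul_mul_inv_mul hInv, hT, neg_neg]
  · rw [hSinv, matIm, matIm, ← hskew, ← conjTranspose_mul_sub_conjTranspose_mul hInv,
      Matrix.mul_smul, Matrix.smul_mul]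
end

section
/- Let M : ℂ₊ → M_n(ℂ) be an n×n matrix-valued Herglotz function, let A = (A_{p,q})_{1≤p,q≤2} ∈ 𝒜_{2n}, and assume that A_{1,1} + A_{1,2}M(z) is invertible for every z ∈ ℂ₊. Then the map M_A(z) = (A_{2,1} + A_{2,2}M(z))(A_{1,1} + A_{1,2}M(z))⁻¹ is again an n×n matrix-valued Herglotz function, i.e., M_A is analytic on ℂ₊ and Im(M_A(z)) is positive semidefinite for all z ∈ ℂ₊. -/
open Matrix
open scoped ComplexOrder

/-!
Write `B = A₁₁ + A₁₂ M` and `C = A₂₁ + A₂₂ M`. The block form of `A* J A = J` is exactly what makes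
`B* C - C* B = M - M*`, so `Im (C B⁻¹) = (B⁻¹)* Im (M) B⁻¹` is again positive semidefinite.
Analyticity is entrywise: `B⁻¹ = det(B)⁻¹ adj(B)`, and determinants and adjugates are polynomials
in the entries.
-/

namespace Matrix

section Differentiable

variable {𝕜 E : Type*} [NontriviallyNormedField 𝕜] [NormedAddCommGroup E] [NormedSpace 𝕜 E]
  {l m o : Type*} {s : Set E}

theorem differentiableOn_mul_apply [Fintype l] {A : E → Matrix m l 𝕜} {B : E → Matrix l o 𝕜}
    (hA : ∀ i j, DifferentiableOn 𝕜 (fun z => A z i j) s)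
    (hB : ∀ i j, DifferentiableOn 𝕜 (fun z => B z i j) s) (i : m) (j : o) :
    DifferentiableOn 𝕜 (fun z => (A z * B z) i j) s := by
  simp only [mul_apply]
  exact DifferentiableOn.fun_sum fun k _ => (hA i k).mul (hB k j)

section Square

variable [Fintype m] [DecidableEq m]

theorem differentiableOn_det {B : E → Matrix m m 𝕜}
    (hB : ∀ i j, DifferentiableOn 𝕜 (fun z => B z i j) s) :
    DifferentiableOn 𝕜 (fun z => (B z).det) s := by
  simp only [det_apply']
  have hprod (σ : Equiv.Perm m) : DifferentiableOn 𝕜 (fun z => ∏ i, B z (σ i) i) s :=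
    fun z hz => (HasFDerivWithinAt.finsetProd fun i _ =>
      (hB (σ i) i z hz).hasFDerivWithinAt).differentiableWithinAt
  exact DifferentiableOn.fun_sum fun σ _ => (differentiableOn_const _).fun_mul (hprod σ)

theorem differentiableOn_adjugate_apply {B : E → Matrix m m 𝕜}
    (hB : ∀ i j, DifferentiableOn 𝕜 (fun z => B z i j) s) (i j : m) :
    DifferentiableOn 𝕜 (fun z => (B z).adjugate i j) s := by
  simp only [adjugate_apply]
  refine differentiableOn_det fun a b => ?_
  by_cases hab : a = j
  · subst hab
    simpa only [updateRow_self] using differentiableOn_const _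
  · simpa only [updateRow_ne hab] using hB a b

theorem differentiableOn_inv_apply {B : E → Matrix m m 𝕜}
    (hB : ∀ i j, DifferentiableOn 𝕜 (fun z => B z i j) s) (hunit : ∀ z ∈ s, IsUnit (B z))
    (i j : m) :
    DifferentiableOn 𝕜 (fun z => (B z)⁻¹ i j) s := by
  have hdet : ∀ z ∈ s, (B z).det ≠ 0 := fun z hz =>
    ((isUnit_iff_isUnit_det _).mp (hunit z hz)).ne_zero
  refine (((differentiableOn_det hB).fun_inv hdet).fun_mul
    (differentiableOn_adjugate_apply hB i j)).congr fun z _ => ?_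
  rw [inv_def, Ring.inverse_eq_inv, smul_apply, smul_eq_mul]

end Square

end Differentiable

theorem mul_inv_sub_conjTranspose {R m : Type*} [CommRing R] [StarRing R] [Fintype m]
    [DecidableEq m] {B : Matrix m m R} (hB : IsUnit B) (C : Matrix m m R) :
    C * B⁻¹ - (C * B⁻¹)ᴴ = (B⁻¹)ᴴ * (Bᴴ * C - Cᴴ * B) * B⁻¹ := by
  have hBB : B * B⁻¹ = 1 := mul_nonsing_inv B ((isUnit_iff_isUnit_det B).mp hB)
  have hBB' : (B⁻¹)ᴴ * Bᴴ = 1 := by rw [← conjTranspose_mul, hBB, conjTranspose_one]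
  rw [Matrix.mul_sub, Matrix.sub_mul, conjTranspose_mul, ← Matrix.mul_assoc, hBB', Matrix.one_mul,
    Matrix.mul_assoc, Matrix.mul_assoc, hBB, Matrix.mul_one]

end Matrix

section Symplectic

variable {n : ℕ} {A11 A12 A21 A22 : Matrix (Fin n) (Fin n) ℂ}

theorem blocks_of_conjTranspose_mul_J2n_mul
    (hA : (fromBlocks A11 A12 A21 A22)ᴴ * J2n n * fromBlocks A11 A12 A21 A22 = J2n n) :
    A11ᴴ * A21 = A21ᴴ * A11 ∧ A11ᴴ * A22 - A21ᴴ * A12 = 1 ∧ A12ᴴ * A22 = A22ᴴ * A12 := by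
  rw [J2n, fromBlocks_conjTranspose, fromBlocks_multiply, fromBlocks_multiply] at hA
  simp only [Matrix.mul_zero, Matrix.mul_one, Matrix.mul_neg, Matrix.neg_mul, zero_add,
    add_zero] at hA
  obtain ⟨h11, h12, -, h22⟩ := fromBlocks_inj.mp hA
  refine ⟨?_, ?_, ?_⟩
  · linear_combination (norm := abel) -h11
  · linear_combination (norm := abel) -h12
  · linear_combination (norm := abel) -h22

theorem conjTranspose_mul_sub_of_J2n
    (hA : (fromBlocks A11 A12 A21 A22)ᴴ * J2n n * fromBlocks A11 A12 A21 A22 = J2n n)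
    (X : Matrix (Fin n) (Fin n) ℂ) :
    (A11 + A12 * X)ᴴ * (A21 + A22 * X) - (A21 + A22 * X)ᴴ * (A11 + A12 * X) = X - Xᴴ := by
  obtain ⟨h11, h12, h22⟩ := blocks_of_conjTranspose_mul_J2n_mul hA
  calc (A11 + A12 * X)ᴴ * (A21 + A22 * X) - (A21 + A22 * X)ᴴ * (A11 + A12 * X)
      = (A11ᴴ * A21 - A21ᴴ * A11) + (A11ᴴ * A22 - A21ᴴ * A12) * X
          - Xᴴ * (A11ᴴ * A22 - A21ᴴ * A12)ᴴ + Xᴴ * (A12ᴴ * A22 - A22ᴴ * A12) * X := by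
        simp only [conjTranspose_add, conjTranspose_sub, conjTranspose_mul,
          conjTranspose_conjTranspose]
        noncomm_ring
    _ = X - Xᴴ := by
        rw [h11, h12, h22, conjTranspose_one]
        noncomm_ring

theorem matIm_linearFractional
    (hA : (fromBlocks A11 A12 A21 A22)ᴴ * J2n n * fromBlocks A11 A12 A21 A22 = J2n n)
    {X : Matrix (Fin n) (Fin n) ℂ} (hX : IsUnit (A11 + A12 * X)) :
    matIm ((A21 + A22 * X) * (A11 + A12 * X)⁻¹)
      = ((A11 + A12 * X)⁻¹)ᴴ * matIm X * (A11 + A12 * X)⁻¹ := by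
  rw [matIm, matIm, mul_inv_sub_conjTranspose hX, conjTranspose_mul_sub_of_J2n hA,
    Matrix.mul_smul, Matrix.smul_mul]

end Symplectic

/-- If `M` is an `n × n` matrix-valued Herglotz function, `A = (A_{p,q}) ∈ 𝒜_{2n}`, and
`A₁₁ + A₁₂ M(z)` is invertible for all `z` in the open upper half-plane, then
`M_A(z) = (A₂₁ + A₂₂ M(z))(A₁₁ + A₁₂ M(z))⁻¹` is again a matrix-valued Herglotz function:
it is analytic (entrywise) on the upper half-plane and `Im (M_A(z)) ≥ 0` there. -/
theorem linear_fractional_transform_herglotz {n : ℕ}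
    (M : ℂ → Matrix (Fin n) (Fin n) ℂ)
    (hanal : ∀ i j : Fin n, DifferentiableOn ℂ (fun z => M z i j) {z : ℂ | 0 < z.im})
    (hpos : ∀ z : ℂ, 0 < z.im → (matIm (M z)).PosSemidef)
    (A11 A12 A21 A22 : Matrix (Fin n) (Fin n) ℂ)
    (hA : (Matrix.fromBlocks A11 A12 A21 A22)ᴴ * J2n n * Matrix.fromBlocks A11 A12 A21 A22
      = J2n n)
    (hInv : ∀ z : ℂ, 0 < z.im → IsUnit (A11 + A12 * M z)) :
    (∀ i j : Fin n, DifferentiableOn ℂ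
        (fun z => ((A21 + A22 * M z) * (A11 + A12 * M z)⁻¹) i j) {z : ℂ | 0 < z.im}) ∧
      ∀ z : ℂ, 0 < z.im →
        (matIm ((A21 + A22 * M z) * (A11 + A12 * M z)⁻¹)).PosSemidef := by
  have haffine (P Q : Matrix (Fin n) (Fin n) ℂ) (i j : Fin n) :
      DifferentiableOn ℂ (fun z => (P + Q * M z) i j) {z : ℂ | 0 < z.im} :=
    (differentiableOn_const _).add <|
      differentiableOn_mul_apply (A := fun _ => Q) (fun _ _ => differentiableOn_const _) hanal i j
  refine ⟨differentiableOn_mul_apply (haffine A21 A22)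
    (differentiableOn_inv_apply (haffine A11 A12) hInv), fun z hz => ?_⟩
  rw [matIm_linearFractional hA (hInv z hz)]
  exact (hpos z hz).conjTranspose_mul_mul_same _
end

section
/- Let A, B ∈ 𝒜_{2n} and M ∈ M_n(ℂ). Assume B_{1,1} + B_{1,2}M is invertible, set M_B(M) = (B_{2,1} + B_{2,2}M)(B_{1,1} + B_{1,2}M)⁻¹, and assume A_{1,1} + A_{1,2}M_B(M) is invertible. Then (AB)_{1,1} + (AB)_{1,2}M is invertible and M_A(M_B(M)) = M_{AB}(M), where for C ∈ 𝒜_{2n} with C_{1,1} + C_{1,2}M invertible one sets M_C(M) = (C_{2,1} + C_{2,2}M)(C_{1,1} + C_{1,2}M)⁻¹. -/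
open Matrix

/-!
Writing `P = B₁₁ + B₁₂ M` and `N = M_B(M)`, so that `N P = B₂₁ + B₂₂ M`, the block formula for
`AB` gives `(AB)_{i,1} + (AB)_{i,2} M = (A_{i,1} + A_{i,2} N) P` for both block rows `i`.
Hence the denominator of `M_{AB}(M)` is the product of two units, and the factor `P` cancels
in the quotient.
-/

namespace Matrix

section BlockMul

variable {R : Type*} [NonUnitalNonAssocSemiring R] {l m n o p q : Type*} [Fintype n] [Fintype o]
    (A : Matrix (l ⊕ m) (n ⊕ o) R) (B : Matrix (n ⊕ o) (p ⊕ q) R)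

theorem toBlocks₁₁_mul :
    (A * B).toBlocks₁₁ = A.toBlocks₁₁ * B.toBlocks₁₁ + A.toBlocks₁₂ * B.toBlocks₂₁ := by
  conv_lhs => rw [← fromBlocks_toBlocks A, ← fromBlocks_toBlocks B, fromBlocks_multiply]
  rfl

theorem toBlocks₁₂_mul :
    (A * B).toBlocks₁₂ = A.toBlocks₁₁ * B.toBlocks₁₂ + A.toBlocks₁₂ * B.toBlocks₂₂ := by
  conv_lhs => rw [← fromBlocks_toBlocks A, ← fromBlocks_toBlocks B, fromBlocks_multiply]
  rfl

theorem toBlocks₂₁_mul :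
    (A * B).toBlocks₂₁ = A.toBlocks₂₁ * B.toBlocks₁₁ + A.toBlocks₂₂ * B.toBlocks₂₁ := by
  conv_lhs => rw [← fromBlocks_toBlocks A, ← fromBlocks_toBlocks B, fromBlocks_multiply]
  rfl

theorem toBlocks₂₂_mul :
    (A * B).toBlocks₂₂ = A.toBlocks₂₁ * B.toBlocks₁₂ + A.toBlocks₂₂ * B.toBlocks₂₂ := by
  conv_lhs => rw [← fromBlocks_toBlocks A, ← fromBlocks_toBlocks B, fromBlocks_multiply]
  rfl

end BlockMul

section LinFrac

variable {R : Type*} [CommRing R] {m n : Type*} [Fintype m] [Fintype n] [DecidableEq m]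

def linFracDen (C : Matrix (m ⊕ n) (m ⊕ n) R) (M : Matrix n m R) : Matrix m m R :=
  C.toBlocks₁₁ + C.toBlocks₁₂ * M

def linFracNum (C : Matrix (m ⊕ n) (m ⊕ n) R) (M : Matrix n m R) : Matrix n m R :=
  C.toBlocks₂₁ + C.toBlocks₂₂ * M

/-- `M_C(M)`; where `linFracDen C M` is not invertible, `⁻¹` returns `0`. -/
noncomputable def linFrac (C : Matrix (m ⊕ n) (m ⊕ n) R) (M : Matrix n m R) : Matrix n m R :=
  linFracNum C M * (linFracDen C M)⁻¹

theorem linFrac_mul_linFracDen {C : Matrix (m ⊕ n) (m ⊕ n) R} {M : Matrix n m R}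
    (hC : IsUnit (linFracDen C M)) : linFrac C M * linFracDen C M = linFracNum C M :=
  nonsing_inv_mul_cancel_right _ _ ((isUnit_iff_isUnit_det _).mp hC)

theorem mul_add_mul_mul_eq_linFrac_mul_linFracDen {l : Type*} (X : Matrix l m R)
    (Y : Matrix l n R) {B : Matrix (m ⊕ n) (m ⊕ n) R} {M : Matrix n m R}
    (hB : IsUnit (linFracDen B M)) :
    X * B.toBlocks₁₁ + Y * B.toBlocks₂₁ + (X * B.toBlocks₁₂ + Y * B.toBlocks₂₂) * M =
      (X + Y * linFrac B M) * linFracDen B M := by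
  conv_rhs => rw [Matrix.add_mul, Matrix.mul_assoc, linFrac_mul_linFracDen hB]
  simp only [linFracDen, linFracNum, Matrix.add_mul, Matrix.mul_add, Matrix.mul_assoc]
  abel

theorem linFracDen_mul (A : Matrix (m ⊕ n) (m ⊕ n) R) {B : Matrix (m ⊕ n) (m ⊕ n) R}
    {M : Matrix n m R} (hB : IsUnit (linFracDen B M)) :
    linFracDen (A * B) M = linFracDen A (linFrac B M) * linFracDen B M := by
  rw [linFracDen, toBlocks₁₁_mul, toBlocks₁₂_mul,
    mul_add_mul_mul_eq_linFrac_mul_linFracDen _ _ hB]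
  rfl

theorem linFracNum_mul (A : Matrix (m ⊕ n) (m ⊕ n) R) {B : Matrix (m ⊕ n) (m ⊕ n) R}
    {M : Matrix n m R} (hB : IsUnit (linFracDen B M)) :
    linFracNum (A * B) M = linFracNum A (linFrac B M) * linFracDen B M := by
  rw [linFracNum, toBlocks₂₁_mul, toBlocks₂₂_mul,
    mul_add_mul_mul_eq_linFrac_mul_linFracDen _ _ hB]
  rfl

theorem isUnit_linFracDen_mul {A B : Matrix (m ⊕ n) (m ⊕ n) R} {M : Matrix n m R}
    (hB : IsUnit (linFracDen B M)) (hA : IsUnit (linFracDen A (linFrac B M))) :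
    IsUnit (linFracDen (A * B) M) := by
  rw [linFracDen_mul A hB]
  exact hA.mul hB

theorem linFrac_mul (A : Matrix (m ⊕ n) (m ⊕ n) R) {B : Matrix (m ⊕ n) (m ⊕ n) R}
    {M : Matrix n m R} (hB : IsUnit (linFracDen B M)) :
    linFrac (A * B) M = linFrac A (linFrac B M) := by
  have hBdet := (isUnit_iff_isUnit_det _).mp hB
  rw [linFrac, linFracNum_mul A hB, linFracDen_mul A hB, mul_inv_rev, Matrix.mul_assoc,
    ← Matrix.mul_assoc (linFracDen B M), mul_nonsing_inv _ hBdet, Matrix.one_mul]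
  rfl

end LinFrac

end Matrix

theorem linear_fractional_transform_comp_general {n : ℕ}
    (A B : Matrix (Fin n ⊕ Fin n) (Fin n ⊕ Fin n) ℂ)
    (M : Matrix (Fin n) (Fin n) ℂ)
    (hBInv : IsUnit (B.toBlocks₁₁ + B.toBlocks₁₂ * M))
    (hAInv : IsUnit (A.toBlocks₁₁ + A.toBlocks₁₂ *
      ((B.toBlocks₂₁ + B.toBlocks₂₂ * M) * (B.toBlocks₁₁ + B.toBlocks₁₂ * M)⁻¹))) :
    IsUnit ((A * B).toBlocks₁₁ + (A * B).toBlocks₁₂ * M) ∧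
      (A.toBlocks₂₁ + A.toBlocks₂₂ *
          ((B.toBlocks₂₁ + B.toBlocks₂₂ * M) * (B.toBlocks₁₁ + B.toBlocks₁₂ * M)⁻¹)) *
        (A.toBlocks₁₁ + A.toBlocks₁₂ *
          ((B.toBlocks₂₁ + B.toBlocks₂₂ * M) * (B.toBlocks₁₁ + B.toBlocks₁₂ * M)⁻¹))⁻¹ =
      ((A * B).toBlocks₂₁ + (A * B).toBlocks₂₂ * M) *
        ((A * B).toBlocks₁₁ + (A * B).toBlocks₁₂ * M)⁻¹ :=
  ⟨isUnit_linFracDen_mul (M := M) hBInv hAInv, (linFrac_mul A (M := M) hBInv).symm⟩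

/-- Composition rule for linear fractional transformations: if `A, B ∈ 𝒜_{2n}`,
`B₁₁ + B₁₂ M` is invertible, `M_B(M) = (B₂₁ + B₂₂ M)(B₁₁ + B₁₂ M)⁻¹`, and
`A₁₁ + A₁₂ M_B(M)` is invertible, then `(AB)₁₁ + (AB)₁₂ M` is invertible and
`M_A(M_B(M)) = M_{AB}(M)`. -/
theorem linear_fractional_transform_comp {n : ℕ}
    (A B : Matrix (Fin n ⊕ Fin n) (Fin n ⊕ Fin n) ℂ)
    (hA : Aᴴ * J2n n * A = J2n n) (hB : Bᴴ * J2n n * B = J2n n)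
    (M : Matrix (Fin n) (Fin n) ℂ)
    (hBInv : IsUnit (B.toBlocks₁₁ + B.toBlocks₁₂ * M))
    (hAInv : IsUnit (A.toBlocks₁₁ + A.toBlocks₁₂ *
      ((B.toBlocks₂₁ + B.toBlocks₂₂ * M) * (B.toBlocks₁₁ + B.toBlocks₁₂ * M)⁻¹))) :
    IsUnit ((A * B).toBlocks₁₁ + (A * B).toBlocks₁₂ * M) ∧
      (A.toBlocks₂₁ + A.toBlocks₂₂ *
          ((B.toBlocks₂₁ + B.toBlocks₂₂ * M) * (B.toBlocks₁₁ + B.toBlocks₁₂ * M)⁻¹)) *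
        (A.toBlocks₁₁ + A.toBlocks₁₂ *
          ((B.toBlocks₂₁ + B.toBlocks₂₂ * M) * (B.toBlocks₁₁ + B.toBlocks₁₂ * M)⁻¹))⁻¹ =
      ((A * B).toBlocks₂₁ + (A * B).toBlocks₂₂ * M) *
        ((A * B).toBlocks₁₁ + (A * B).toBlocks₁₂ * M)⁻¹ :=
  linear_fractional_transform_comp_general A B M hBInv hAInv
end

section
/- Let m be a Herglotz function with Nevanlinna representation m(z) = c + dz + ∫_ℝ ((λ − z)⁻¹ − λ(1 + λ²)⁻¹) dω(λ) for all z ∈ ℂ₊, where c ∈ ℝ, d ≥ 0, and ω is a Borel measure on ℝ with ∫_ℝ (1 + λ²)⁻¹ dω(λ) < ∞. Then for every pair λ₁ < λ₂ of real numbers the Stieltjes inversion formula holds: (1/2)ω({λ₁}) + (1/2)ω({λ₂}) + ω((λ₁, λ₂)) = lim_{ε↓0} π⁻¹ ∫_{λ₁}^{λ₂} Im(m(λ + iε)) dλ. -/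
open MeasureTheory Filter Topology Real

/-!
Taking imaginary parts in the Nevanlinna representation gives
`Im m(λ + iε) = d ε + ∫ P_ε(t - λ) dω(t)` with the Poisson kernel `P_ε(s) = ε / (s² + ε²)`.
Integrating over `[λ₁, λ₂]` and applying Fubini, the right side becomes
`d ε (λ₂ - λ₁) + ∫ (arctan ((λ₂ - t) / ε) - arctan ((λ₁ - t) / ε)) dω(t)`.
As `ε ↓ 0` the integrand tends to `(π / 2) (sgn (λ₂ - t) - sgn (λ₁ - t))`, which is `π` on
`(λ₁, λ₂)`, `π / 2` at the endpoints and `0` elsewhere. Dominated convergence applies because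
`(1 + t²) P_ε(t - λ) ≤ 2 (1 + λ²) (ε + P_ε(t - λ))` makes the integrand `O((1 + t²)⁻¹)` uniformly
in `ε ≤ 1`, and `(1 + t²)⁻¹` is `ω`-integrable.
-/

theorem isFiniteMeasureOnCompacts_of_lintegral_lt_top {X : Type*} [TopologicalSpace X]
    [MeasurableSpace X] [OpensMeasurableSpace X] {μ : Measure X} {f : X → ℝ}
    (hf : Continuous f) (hpos : ∀ x, 0 < f x) (hμ : ∫⁻ x, ENNReal.ofReal (f x) ∂μ < ⊤) :
    IsFiniteMeasureOnCompacts μ := by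
  refine ⟨fun K hK => ?_⟩
  rcases K.eq_empty_or_nonempty with rfl | hne
  · simp
  obtain ⟨x₀, -, hmin⟩ := hK.exists_isMinOn hne hf.continuousOn
  have hmass : ENNReal.ofReal (f x₀) * μ K ≤ ∫⁻ x, ENNReal.ofReal (f x) ∂μ := calc
    ENNReal.ofReal (f x₀) * μ K = ∫⁻ _ in K, ENNReal.ofReal (f x₀) ∂μ :=
      (setLIntegral_const _ _).symm
    _ ≤ ∫⁻ x in K, ENNReal.ofReal (f x) ∂μ :=
      setLIntegral_mono (by fun_prop) fun x hx => ENNReal.ofReal_le_ofReal (hmin hx)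
    _ ≤ _ := setLIntegral_le_lintegral _ _
  exact ENNReal.lt_top_of_mul_ne_top_right (ne_top_of_le_ne_top hμ.ne hmass)
    (by simpa using hpos x₀)

noncomputable def halfPlanePoissonKernel (ε t : ℝ) : ℝ := ε / (t ^ 2 + ε ^ 2)

section HalfPlanePoissonKernel

variable {ε : ℝ}

theorem halfPlanePoissonKernel_pos (hε : 0 < ε) (t : ℝ) : 0 < halfPlanePoissonKernel ε t := by
  unfold halfPlanePoissonKernel; positivity

theorem continuous_halfPlanePoissonKernel (hε : 0 < ε) : Continuous (halfPlanePoissonKernel ε) :=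
  continuous_const.div (by fun_prop) fun t => by positivity

theorem halfPlanePoissonKernel_le_inv (hε : 0 < ε) (t : ℝ) :
    halfPlanePoissonKernel ε t ≤ ε⁻¹ := by
  rw [halfPlanePoissonKernel, div_le_iff₀ (by positivity)]
  field_simp
  nlinarith [sq_nonneg t]

theorem sq_mul_halfPlanePoissonKernel_le (hε : 0 < ε) (t : ℝ) :
    t ^ 2 * halfPlanePoissonKernel ε t ≤ ε := by
  rw [halfPlanePoissonKernel, mul_div_assoc', div_le_iff₀ (by positivity)]
  nlinarith [sq_nonneg ε, sq_nonneg t]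

theorem one_add_sq_mul_halfPlanePoissonKernel_le (hε : 0 < ε) (t l : ℝ) :
    (1 + t ^ 2) * halfPlanePoissonKernel ε (t - l)
      ≤ 2 * (1 + l ^ 2) * (ε + halfPlanePoissonKernel ε (t - l)) := by
  have hpeetre : 1 + t ^ 2 ≤ 2 * (1 + l ^ 2) * (1 + (t - l) ^ 2) := by
    nlinarith [sq_nonneg (t - 2 * l), sq_nonneg (l * (t - l))]
  have hP := (halfPlanePoissonKernel_pos hε (t - l)).le
  have hsq := sq_mul_halfPlanePoissonKernel_le hε (t - l)
  set P := halfPlanePoissonKernel ε (t - l)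
  calc (1 + t ^ 2) * P ≤ 2 * (1 + l ^ 2) * (1 + (t - l) ^ 2) * P := by gcongr
    _ = 2 * (1 + l ^ 2) * (P + (t - l) ^ 2 * P) := by ring
    _ ≤ 2 * (1 + l ^ 2) * (ε + P) := by gcongr 2 * (1 + l ^ 2) * ?_; linarith

theorem hasDerivAt_arctan_div (hε : 0 < ε) (t l : ℝ) :
    HasDerivAt (fun l => arctan ((l - t) / ε)) (halfPlanePoissonKernel ε (t - l)) l := by
  have hlin : HasDerivAt (fun l => (l - t) / ε) ε⁻¹ l := by
    simpa using ((hasDerivAt_id l).sub_const t).div_const ε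
  refine ((hasDerivAt_arctan _).comp l hlin).congr_deriv ?_
  rw [halfPlanePoissonKernel]
  field_simp
  ring

theorem integral_halfPlanePoissonKernel (hε : 0 < ε) (t a b : ℝ) :
    ∫ l in a..b, halfPlanePoissonKernel ε (t - l) = arctan ((b - t) / ε) - arctan ((a - t) / ε) :=
  intervalIntegral.integral_eq_sub_of_hasDerivAt (fun l _ => hasDerivAt_arctan_div hε t l)
    (((continuous_halfPlanePoissonKernel hε).comp (continuous_sub_left t)).intervalIntegrable _ _)

end HalfPlanePoissonKernel

section NevanlinnaIntegrand

variable {z : ℂ}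

theorem ofReal_sub_ne_zero_of_im_pos (hz : 0 < z.im) (t : ℝ) : (t : ℂ) - z ≠ 0 := by
  intro h
  simpa [hz.ne'] using congrArg Complex.im h

theorem nevanlinna_integrand_eq (hz : 0 < z.im) (t : ℝ) :
    ((t : ℂ) - z)⁻¹ - t * (1 + (t : ℂ) ^ 2)⁻¹
      = ((1 + z ^ 2) / (t - z) + z) * (((1 + t ^ 2)⁻¹ : ℝ) : ℂ) := by
  have h1 : (1 + (t : ℂ) ^ 2) ≠ 0 := by exact_mod_cast (by positivity : (1 + t ^ 2 : ℝ) ≠ 0)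
  push_cast
  field_simp [ofReal_sub_ne_zero_of_im_pos hz t]
  ring

theorem norm_nevanlinna_integrand_le (hz : 0 < z.im) (t : ℝ) :
    ‖((t : ℂ) - z)⁻¹ - t * (1 + (t : ℂ) ^ 2)⁻¹‖ ≤ (‖1 + z ^ 2‖ / z.im + ‖z‖) * (1 + t ^ 2)⁻¹ := by
  have him : z.im ≤ ‖(t : ℂ) - z‖ := by
    simpa using (le_abs_self z.im).trans (by simpa using Complex.abs_im_le_norm ((t : ℂ) - z))
  rw [nevanlinna_integrand_eq hz, norm_mul, Complex.norm_real, Real.norm_of_nonneg (by positivity)]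
  gcongr
  calc ‖(1 + z ^ 2) / (t - z) + z‖ ≤ ‖1 + z ^ 2‖ / ‖(t : ℂ) - z‖ + ‖z‖ := by
        rw [← norm_div]; exact norm_add_le _ _
    _ ≤ ‖1 + z ^ 2‖ / z.im + ‖z‖ := by gcongr

theorem integrable_nevanlinna_integrand {ω : Measure ℝ}
    (hω : Integrable (fun t : ℝ => (1 + t ^ 2)⁻¹) ω) (hz : 0 < z.im) :
    Integrable (fun t : ℝ => ((t : ℂ) - z)⁻¹ - t * (1 + (t : ℂ) ^ 2)⁻¹) ω :=
  (hω.const_mul _).mono' (by fun_prop : Measurable _).aestronglyMeasurable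
    (ae_of_all _ (norm_nevanlinna_integrand_le hz))

theorem im_nevanlinna_integrand (t l ε : ℝ) :
    (((t : ℂ) - (l + ε * Complex.I))⁻¹ - t * (1 + (t : ℂ) ^ 2)⁻¹).im
      = halfPlanePoissonKernel ε (t - l) := by
  have hreal : (t : ℂ) * (1 + (t : ℂ) ^ 2)⁻¹ = ((t * (1 + t ^ 2)⁻¹ : ℝ) : ℂ) := by push_cast; rfl
  rw [Complex.sub_im, hreal, Complex.ofReal_im, sub_zero, Complex.inv_im, Complex.normSq_apply,
    halfPlanePoissonKernel]
  simp only [Complex.sub_re, Complex.sub_im, Complex.add_re, Complex.add_im, Complex.ofReal_re,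
    Complex.ofReal_im, Complex.mul_re, Complex.mul_im, Complex.I_re, Complex.I_im]
  ring

end NevanlinnaIntegrand

theorem im_eq_of_nevanlinna {m : ℂ → ℂ} {c d : ℝ} {ω : Measure ℝ}
    (hrep : ∀ z : ℂ, 0 < z.im →
      m z = (c : ℂ) + (d : ℂ) * z +
        ∫ l : ℝ, (((l : ℂ) - z)⁻¹ - (l : ℂ) * (1 + (l : ℂ) ^ 2)⁻¹) ∂ω)
    (hω : Integrable (fun t : ℝ => (1 + t ^ 2)⁻¹) ω) {ε : ℝ} (hε : 0 < ε) (l : ℝ) :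
    (m (l + ε * Complex.I)).im = d * ε + ∫ t, halfPlanePoissonKernel ε (t - l) ∂ω := by
  have hz : 0 < ((l : ℂ) + ε * Complex.I).im := by simpa using hε
  have him := integral_im (integrable_nevanlinna_integrand hω hz)
  simp only [RCLike.im_eq_complex_im, im_nevanlinna_integrand] at him
  rw [hrep _ hz, Complex.add_im, ← him]
  simp

theorem sq_le_sq_add_sq_of_mem_Icc {a b l : ℝ} (hl : l ∈ Set.Icc a b) : l ^ 2 ≤ a ^ 2 + b ^ 2 := by
  obtain ⟨hal, hlb⟩ := hl
  rcases le_total 0 l with h | h <;> nlinarith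

section Fubini

variable {ω : Measure ℝ} [SFinite ω] {ε a b : ℝ}

theorem halfPlanePoissonKernel_le_of_mem_Icc (hε : 0 < ε) {l : ℝ} (hl : l ∈ Set.Icc a b)
    (t : ℝ) :
    halfPlanePoissonKernel ε (t - l) ≤ 2 * (1 + a ^ 2 + b ^ 2) * (ε + ε⁻¹) * (1 + t ^ 2)⁻¹ := by
  rw [le_mul_inv_iff₀ (by positivity), mul_comm]
  calc (1 + t ^ 2) * halfPlanePoissonKernel ε (t - l)
      ≤ 2 * (1 + l ^ 2) * (ε + halfPlanePoissonKernel ε (t - l)) :=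
        one_add_sq_mul_halfPlanePoissonKernel_le hε t l
    _ ≤ 2 * (1 + a ^ 2 + b ^ 2) * (ε + ε⁻¹) := by
        refine mul_le_mul ?_ (add_le_add_right (halfPlanePoissonKernel_le_inv hε _) ε)
          (add_pos hε (halfPlanePoissonKernel_pos hε _)).le (by positivity)
        linarith [sq_le_sq_add_sq_of_mem_Icc hl]

theorem integrable_halfPlanePoissonKernel_prod (hω : Integrable (fun t : ℝ => (1 + t ^ 2)⁻¹) ω)
    (hε : 0 < ε) :
    Integrable (Function.uncurry fun l t => halfPlanePoissonKernel ε (t - l))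
      ((volume.restrict (Set.Ioc a b)).prod ω) := by
  have hdom : Integrable (fun p : ℝ × ℝ => 2 * (1 + a ^ 2 + b ^ 2) * (ε + ε⁻¹) * (1 + p.2 ^ 2)⁻¹)
      ((volume.restrict (Set.Ioc a b)).prod ω) :=
    (integrable_const _).mul_prod hω
  have hmem : ∀ᵐ p : ℝ × ℝ ∂(volume.restrict (Set.Ioc a b)).prod ω, p.1 ∈ Set.Ioc a b := by
    rw [Measure.restrict_prod_eq_prod_univ]
    filter_upwards [ae_restrict_mem (measurableSet_Ioc.prod MeasurableSet.univ)] with p hp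
    exact hp.1
  refine hdom.mono' ((continuous_halfPlanePoissonKernel hε).comp
    (by fun_prop : Continuous fun p : ℝ × ℝ => p.2 - p.1)).aestronglyMeasurable ?_
  filter_upwards [hmem] with p hp
  change ‖halfPlanePoissonKernel ε (p.2 - p.1)‖ ≤ _
  rw [Real.norm_of_nonneg (halfPlanePoissonKernel_pos hε _).le]
  exact halfPlanePoissonKernel_le_of_mem_Icc hε (Set.Ioc_subset_Icc_self hp) p.2

theorem intervalIntegrable_integral_halfPlanePoissonKernel
    (hω : Integrable (fun t : ℝ => (1 + t ^ 2)⁻¹) ω) (hε : 0 < ε) (hab : a ≤ b) :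
    IntervalIntegrable (fun l => ∫ t, halfPlanePoissonKernel ε (t - l) ∂ω) volume a b :=
  (intervalIntegrable_iff_integrableOn_Ioc_of_le hab).2
    (integrable_halfPlanePoissonKernel_prod hω hε).integral_prod_left

theorem integral_integral_halfPlanePoissonKernel
    (hω : Integrable (fun t : ℝ => (1 + t ^ 2)⁻¹) ω) (hε : 0 < ε) (hab : a ≤ b) :
    ∫ l in a..b, ∫ t, halfPlanePoissonKernel ε (t - l) ∂ω
      = ∫ t, (arctan ((b - t) / ε) - arctan ((a - t) / ε)) ∂ω := by
  rw [intervalIntegral.integral_of_le hab,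
    integral_integral_swap (integrable_halfPlanePoissonKernel_prod hω hε)]
  simp_rw [← intervalIntegral.integral_of_le hab, integral_halfPlanePoissonKernel hε]

end Fubini

theorem tendsto_arctan_div_nhdsGT_zero (a : ℝ) :
    Tendsto (fun ε => arctan (a / ε)) (𝓝[>] 0) (𝓝 (SignType.sign a * (π / 2))) := by
  rcases lt_trichotomy a 0 with ha | rfl | ha
  · have hdiv : Tendsto (fun ε => a / ε) (𝓝[>] 0) atBot := by
      simpa only [div_eq_mul_inv] using tendsto_inv_nhdsGT_zero.const_mul_atTop_of_neg ha
    simpa [sign_neg ha, Function.comp_def] using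
      (tendsto_nhds_of_tendsto_nhdsWithin tendsto_arctan_atBot).comp hdiv
  · simp
  · have hdiv : Tendsto (fun ε => a / ε) (𝓝[>] 0) atTop := by
      simpa only [div_eq_mul_inv] using tendsto_inv_nhdsGT_zero.const_mul_atTop ha
    simpa [sign_pos ha, Function.comp_def] using
      (tendsto_nhds_of_tendsto_nhdsWithin tendsto_arctan_atTop).comp hdiv

section Limit

variable {ω : Measure ℝ} {ε a b : ℝ}

theorem arctan_div_sub_arctan_div_nonneg (hε : 0 < ε) (hab : a ≤ b) (t : ℝ) :
    0 ≤ arctan ((b - t) / ε) - arctan ((a - t) / ε) :=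
  sub_nonneg.2 (arctan_strictMono.monotone (div_le_div_of_nonneg_right (by linarith) hε.le))

theorem arctan_div_sub_arctan_div_le (hε : 0 < ε) (hε₁ : ε ≤ 1) (hab : a ≤ b) (t : ℝ) :
    arctan ((b - t) / ε) - arctan ((a - t) / ε)
      ≤ 2 * (1 + a ^ 2 + b ^ 2) * (b - a + π) * (1 + t ^ 2)⁻¹ := by
  set F := arctan ((b - t) / ε) - arctan ((a - t) / ε)
  set C := 2 * (1 + a ^ 2 + b ^ 2)
  have hF : F ≤ π := by
    linarith [arctan_lt_pi_div_two ((b - t) / ε), neg_pi_div_two_lt_arctan ((a - t) / ε)]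
  have hcont : Continuous fun l => halfPlanePoissonKernel ε (t - l) :=
    (continuous_halfPlanePoissonKernel hε).comp (continuous_sub_left t)
  have hweighted : (1 + t ^ 2) * F ≤ C * (ε * (b - a) + F) := by
    have hmono := intervalIntegral.integral_mono_on (μ := volume)
      (g := fun l => C * (ε + halfPlanePoissonKernel ε (t - l))) hab
      ((hcont.const_mul (1 + t ^ 2)).intervalIntegrable _ _)
      (((continuous_const.add hcont).const_mul C).intervalIntegrable _ _)
      fun l hl => (one_add_sq_mul_halfPlanePoissonKernel_le hε t l).trans
        (mul_le_mul_of_nonneg_right (by linarith [sq_le_sq_add_sq_of_mem_Icc hl])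
          (add_pos hε (halfPlanePoissonKernel_pos hε _)).le)
    simpa only [intervalIntegral.integral_const_mul, intervalIntegral.integral_add
      intervalIntegrable_const (hcont.intervalIntegrable _ _), intervalIntegral.integral_const,
      smul_eq_mul, integral_halfPlanePoissonKernel hε, mul_comm ε] using hmono
  rw [le_mul_inv_iff₀ (by positivity), mul_comm]
  calc (1 + t ^ 2) * F ≤ C * (ε * (b - a) + F) := hweighted
    _ ≤ C * (b - a + π) := by gcongr; nlinarith

theorem tendsto_integral_arctan_div_sub_arctan_div
    (hω : Integrable (fun t : ℝ => (1 + t ^ 2)⁻¹) ω) (hab : a ≤ b) :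
    Tendsto (fun ε => ∫ t, (arctan ((b - t) / ε) - arctan ((a - t) / ε)) ∂ω) (𝓝[>] 0)
      (𝓝 (∫ t, (SignType.sign (b - t) - SignType.sign (a - t) : ℝ) * (π / 2) ∂ω)) := by
  refine tendsto_integral_filter_of_dominated_convergence _
    (Eventually.of_forall fun ε => (by fun_prop : Continuous _).aestronglyMeasurable) ?_
    (hω.const_mul (2 * (1 + a ^ 2 + b ^ 2) * (b - a + π))) ?_
  · filter_upwards [Ioc_mem_nhdsGT zero_lt_one] with ε ⟨hε, hε₁⟩
    refine ae_of_all _ fun t => ?_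
    rw [Real.norm_of_nonneg (arctan_div_sub_arctan_div_nonneg hε hab t)]
    exact arctan_div_sub_arctan_div_le hε hε₁ hab t
  · refine ae_of_all _ fun t => ?_
    simpa only [sub_mul] using
      (tendsto_arctan_div_nhdsGT_zero (b - t)).sub (tendsto_arctan_div_nhdsGT_zero (a - t))

theorem sign_sub_sign_eq_indicator (hab : a < b) (t : ℝ) :
    (SignType.sign (b - t) - SignType.sign (a - t) : ℝ)
      = ({a} : Set ℝ).indicator 1 t + ({b} : Set ℝ).indicator 1 t
        + 2 * (Set.Ioo a b).indicator 1 t := by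
  rcases lt_trichotomy t a with hta | rfl | hat
  · simp [Set.indicator, sign_pos, hta, hta.trans hab, hta.ne, (hta.trans hab).ne, hta.not_gt]
  · simp [Set.indicator, sign_pos, hab, hab.ne]
  rcases lt_trichotomy t b with htb | rfl | hbt
  · simp [Set.indicator, sign_pos, _root_.sign_neg, hat, htb, hat.ne', htb.ne]
    norm_num
  · simp [Set.indicator, _root_.sign_neg, hat, hab.ne']
  · simp [Set.indicator, _root_.sign_neg, hbt, hab.trans hbt, hbt.ne', (hab.trans hbt).ne',
      hbt.not_gt]

theorem integral_sign_sub_sign_mul [IsFiniteMeasureOnCompacts ω] (hab : a < b) (k : ℝ) :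
    ∫ t, (SignType.sign (b - t) - SignType.sign (a - t) : ℝ) * k ∂ω
      = (ω.real {a} + ω.real {b} + 2 * ω.real (Set.Ioo a b)) * k := by
  have hint : ∀ {s : Set ℝ}, MeasurableSet s → ω s < ⊤ → Integrable (s.indicator 1) ω :=
    fun hs hfin => (integrableOn_const (C := (1 : ℝ)) hfin.ne).integrable_indicator hs
  have ha := hint (measurableSet_singleton a) isCompact_singleton.measure_lt_top
  have hb := hint (measurableSet_singleton b) isCompact_singleton.measure_lt_top
  have hI := hint (measurableSet_Ioo (a := a) (b := b)) measure_Ioo_lt_top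
  simp_rw [integral_mul_const, sign_sub_sign_eq_indicator hab]
  rw [integral_add (f := fun t => _ + _) (ha.add hb) (hI.const_mul 2), integral_add ha hb,
    integral_const_mul, integral_indicator_one (measurableSet_singleton a),
    integral_indicator_one (measurableSet_singleton b), integral_indicator_one measurableSet_Ioo]

end Limit

theorem stieltjes_inversion_general
    (m : ℂ → ℂ)
    (c d : ℝ) (ω : Measure ℝ)
    (hω : (∫⁻ l : ℝ, ENNReal.ofReal ((1 + l ^ 2)⁻¹) ∂ω) < ⊤)
    (hrep : ∀ z : ℂ, 0 < z.im →
      m z = (c : ℂ) + (d : ℂ) * z +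
        ∫ l : ℝ, (((l : ℂ) - z)⁻¹ - (l : ℂ) * (1 + (l : ℂ) ^ 2)⁻¹) ∂ω)
    (l₁ l₂ : ℝ) (hl : l₁ < l₂) :
    Tendsto (fun ε : ℝ => (Real.pi)⁻¹ * ∫ l in l₁..l₂, (m ((l : ℂ) + ε * Complex.I)).im)
      (𝓝[>] 0)
      (𝓝 ((ω {l₁}).toReal / 2 + (ω {l₂}).toReal / 2 + (ω (Set.Ioo l₁ l₂)).toReal)) := by
  have hcont : Continuous fun l : ℝ => (1 + l ^ 2)⁻¹ := by fun_prop (disch := intro; positivity)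
  have := isFiniteMeasureOnCompacts_of_lintegral_lt_top hcont (fun l => by positivity) hω
  have hωi : Integrable (fun l : ℝ => (1 + l ^ 2)⁻¹) ω :=
    ⟨hcont.aestronglyMeasurable,
      (hasFiniteIntegral_iff_ofReal (ae_of_all _ fun l => by positivity)).2 hω⟩
  have hsplit : ∀ᶠ ε in 𝓝[>] 0, d * ε * (l₂ - l₁)
      + ∫ t, (arctan ((l₂ - t) / ε) - arctan ((l₁ - t) / ε)) ∂ω
        = ∫ l in l₁..l₂, (m ((l : ℂ) + ε * Complex.I)).im := by
    filter_upwards [self_mem_nhdsWithin] with ε (hε : 0 < ε)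
    simp_rw [im_eq_of_nevanlinna hrep hωi hε]
    rw [intervalIntegral.integral_add intervalIntegrable_const
      (intervalIntegrable_integral_halfPlanePoissonKernel hωi hε hl.le),
      integral_integral_halfPlanePoissonKernel hωi hε hl.le, intervalIntegral.integral_const,
      smul_eq_mul, mul_comm (l₂ - l₁)]
  have hdrift : Tendsto (fun ε => d * ε * (l₂ - l₁)) (𝓝[>] 0) (𝓝 0) :=
    ((by fun_prop : Continuous fun ε : ℝ => d * ε * (l₂ - l₁)).tendsto' 0 0 (by simp)).mono_left
      nhdsWithin_le_nhds
  convert ((hdrift.add (tendsto_integral_arctan_div_sub_arctan_div hωi hl.le)).const_mul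
    π⁻¹).congr' (hsplit.mono fun ε h => congrArg (π⁻¹ * ·) h) using 2
  rw [integral_sign_sub_sign_mul hl, measureReal_def, measureReal_def, measureReal_def]
  field_simp
  ring

/-- Stieltjes inversion formula: if `m` is a Herglotz function with Nevanlinna representation
measure `ω`, then for `λ₁ < λ₂`,
`ω({λ₁})/2 + ω({λ₂})/2 + ω((λ₁,λ₂)) = lim_{ε↓0} π⁻¹ ∫_{λ₁}^{λ₂} Im m(λ + iε) dλ`. -/
theorem stieltjes_inversion
    (m : ℂ → ℂ)
    (hanal : DifferentiableOn ℂ m {z : ℂ | 0 < z.im})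
    (hmap : ∀ z : ℂ, 0 < z.im → 0 < (m z).im)
    (c d : ℝ) (ω : Measure ℝ) (hd : 0 ≤ d)
    (hω : (∫⁻ l : ℝ, ENNReal.ofReal ((1 + l ^ 2)⁻¹) ∂ω) < ⊤)
    (hrep : ∀ z : ℂ, 0 < z.im →
      m z = (c : ℂ) + (d : ℂ) * z +
        ∫ l : ℝ, (((l : ℂ) - z)⁻¹ - (l : ℂ) * (1 + (l : ℂ) ^ 2)⁻¹) ∂ω)
    (l₁ l₂ : ℝ) (hl : l₁ < l₂) :
    Tendsto (fun ε : ℝ => (Real.pi)⁻¹ * ∫ l in l₁..l₂, (m ((l : ℂ) + ε * Complex.I)).im)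
      (𝓝[>] 0)
      (𝓝 ((ω {l₁}).toReal / 2 + (ω {l₂}).toReal / 2 + (ω (Set.Ioo l₁ l₂)).toReal)) :=
  stieltjes_inversion_general m c d ω hω hrep l₁ l₂ hl
end

section
/- Let m be a Herglotz function with Nevanlinna representation m(z) = c + dz + ∫_ℝ ((λ − z)⁻¹ − λ(1 + λ²)⁻¹) dω(λ) for all z ∈ ℂ₊, where c ∈ ℝ, d ≥ 0, and ω is a Borel measure on ℝ with ∫_ℝ (1 + λ²)⁻¹ dω(λ) < ∞. Let ω_s denote the singular part of ω with respect to Lebesgue measure. Then the set S = {λ ∈ ℝ : Im(m(λ + iε)) → +∞ as ε↓0} is a minimal support of ω_s relative to Lebesgue measure. -/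
/-!
Writing `P ω x ε = ∫ ε / ((t - x)² + ε²) dω(t)`, the representation gives
`Im m(x + iε) = d ε + P ω x ε`. On the ball `B(x, ε)` the kernel is at least `(2ε)⁻¹`, so
`P ω x ε ≥ ω_s(B(x, ε)) / |B(x, ε)|`, and by Besicovitch differentiation this ratio tends to `∞`
at `ω_s`-almost every point because `ω_s ⟂ Lebesgue`. Conversely, at Lebesgue-almost every `x`
the ratio `ω(B(x, r)) / r` stays bounded for small `r`; covering `B(x, 1)` by the dyadic balls
`B(x, 2ᵏε)`, on which the kernel is `O(4⁻ᵏ/ε)`, and bounding the tail by `∫ (1 + t²)⁻¹ dω` then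
bounds `P ω x ε` uniformly in `ε ≤ 1`. Hence the set `S` carries `ω_s` and is Lebesgue-null.
-/

open MeasureTheory Filter Topology Metric Set
open scoped ENNReal

theorem MeasureTheory.isLocallyFiniteMeasure_of_lintegral_lt_top {X : Type*} [TopologicalSpace X]
    [MeasurableSpace X] [OpensMeasurableSpace X] {μ : Measure X} {w : X → ℝ}
    (hw : Continuous w) (hpos : ∀ x, 0 < w x) (h : ∫⁻ x, ENNReal.ofReal (w x) ∂μ < ∞) :
    IsLocallyFiniteMeasure μ := by
  refine ⟨fun x => ⟨{y | w x / 2 < w y}, (isOpen_lt continuous_const hw).mem_nhds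
    (half_lt_self (hpos x)), ?_⟩⟩
  have hc : ENNReal.ofReal (w x / 2) ≠ 0 := by simp [hpos x]
  calc μ {y | w x / 2 < w y} ≤ μ {y | ENNReal.ofReal (w x / 2) ≤ ENNReal.ofReal (w y)} :=
        measure_mono fun y hy => ENNReal.ofReal_le_ofReal hy.le
    _ ≤ (∫⁻ y, ENNReal.ofReal (w y) ∂μ) / ENNReal.ofReal (w x / 2) :=
        meas_ge_le_lintegral_div hw.measurable.ennreal_ofReal.aemeasurable hc ENNReal.ofReal_ne_top
    _ < ∞ := ENNReal.div_lt_top h.ne hc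

theorem MeasureTheory.Measure.MutuallySingular.ae_tendsto_measure_closedBall_div
    {α : Type*} [MetricSpace α] [ProperSpace α] [MeasurableSpace α] [BorelSpace α]
    [SecondCountableTopology α] [HasBesicovitchCovering α] {μ ν : Measure α}
    [IsLocallyFiniteMeasure μ] [IsFiniteMeasureOnCompacts ν] [ν.IsOpenPosMeasure]
    (h : μ ⟂ₘ ν) :
    ∀ᵐ x ∂μ, Tendsto (fun r => μ (closedBall x r) / ν (closedBall x r)) (𝓝[>] 0) (𝓝 ∞) := by
  filter_upwards [Besicovitch.ae_tendsto_rnDeriv ν μ, (Measure.rnDeriv_eq_zero ν μ).2 h.symm]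
    with x hx hx0
  rw [hx0, Pi.zero_apply, ← tendsto_inv_iff, ENNReal.inv_zero] at hx
  refine hx.congr' (eventually_nhdsWithin_of_forall fun r (hr : 0 < r) => ?_)
  dsimp only
  rw [ENNReal.inv_div (.inr measure_closedBall_lt_top.ne)
    (.inr (measure_closedBall_pos ν x hr).ne')]

theorem ENNReal.tendsto_toReal_atTop {ι : Type*} {l : Filter ι} {f : ι → ℝ≥0∞}
    (hf : ∀ᶠ i in l, f i ≠ ∞) (h : Tendsto f l (𝓝 ∞)) :
    Tendsto (fun i => (f i).toReal) l atTop := by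
  refine tendsto_atTop.2 fun M => ?_
  filter_upwards [hf, h.eventually (eventually_gt_nhds (ENNReal.ofReal_lt_top (r := M)))]
    with i hfi hMi
  exact (ENNReal.ofReal_le_iff_le_toReal hfi).1 hMi.le

theorem isLocallyFiniteMeasure_of_lintegral_inv_one_add_sq_lt_top {μ : Measure ℝ}
    (h : ∫⁻ t, ENNReal.ofReal ((1 + t ^ 2)⁻¹) ∂μ < ∞) : IsLocallyFiniteMeasure μ :=
  isLocallyFiniteMeasure_of_lintegral_lt_top
    ((continuous_const.add (continuous_pow 2)).inv₀ fun t => (by positivity : (1 : ℝ) + t ^ 2 ≠ 0))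
    (fun t : ℝ => (by positivity : 0 < (1 + t ^ 2)⁻¹)) h

theorem integrable_inv_one_add_sq_of_lintegral_lt_top {μ : Measure ℝ}
    (h : ∫⁻ t, ENNReal.ofReal ((1 + t ^ 2)⁻¹) ∂μ < ∞) :
    Integrable (fun t : ℝ => (1 + t ^ 2)⁻¹) μ :=
  ⟨by fun_prop, (hasFiniteIntegral_iff_ofReal (.of_forall fun t => by positivity)).2 h⟩

theorem norm_cauchyKernel_le (z : ℂ) (hz : 0 < z.im) (t : ℝ) :
    ‖((t : ℂ) - z)⁻¹ - t * (1 + (t : ℂ) ^ 2)⁻¹‖ ≤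
      ((1 + ‖z‖ ^ 2) / z.im + ‖z‖) * (1 + t ^ 2)⁻¹ := by
  have hne : (t : ℂ) - z ≠ 0 := fun h => by simpa [hz.ne'] using congrArg Complex.im h
  have hsq : (1 + (t : ℂ) ^ 2) = ((1 + t ^ 2 : ℝ) : ℂ) := by push_cast; ring
  have hsq0 : (1 + (t : ℂ) ^ 2) ≠ 0 := by
    rw [hsq]; exact_mod_cast (by positivity : (0 : ℝ) < 1 + t ^ 2).ne'
  have him : z.im ≤ ‖(t : ℂ) - z‖ := by
    simpa [abs_of_pos hz] using Complex.abs_im_le_norm ((t : ℂ) - z)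
  -- `1 + t z = (1 + z²) + z (t - z)` splits off the part of the kernel that is bounded in `t`
  have key : ((t : ℂ) - z)⁻¹ - t * (1 + (t : ℂ) ^ 2)⁻¹ =
      ((1 + z ^ 2) / ((t : ℂ) - z) + z) * (1 + (t : ℂ) ^ 2)⁻¹ := by
    field_simp
    ring
  rw [key, hsq, norm_mul, norm_inv, Complex.norm_real, Real.norm_of_nonneg (by positivity)]
  gcongr
  calc ‖(1 + z ^ 2) / ((t : ℂ) - z) + z‖ ≤ ‖1 + z ^ 2‖ / ‖(t : ℂ) - z‖ + ‖z‖ := by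
        rw [← norm_div]; exact norm_add_le _ _
    _ ≤ (1 + ‖z‖ ^ 2) / z.im + ‖z‖ := by
        gcongr
        exact (norm_add_le _ _).trans (by simp)

theorem integrable_cauchyKernel {μ : Measure ℝ}
    (h : ∫⁻ t, ENNReal.ofReal ((1 + t ^ 2)⁻¹) ∂μ < ∞) {z : ℂ} (hz : 0 < z.im) :
    Integrable (fun t : ℝ => ((t : ℂ) - z)⁻¹ - t * (1 + (t : ℂ) ^ 2)⁻¹) μ :=
  ((integrable_inv_one_add_sq_of_lintegral_lt_top h).const_mul _).mono' (by fun_prop)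
    (.of_forall (norm_cauchyKernel_le z hz))

theorem im_cauchyKernel (x ε t : ℝ) :
    (((t : ℂ) - (x + ε * Complex.I))⁻¹ - t * (1 + (t : ℂ) ^ 2)⁻¹).im =
      ε / ((t - x) ^ 2 + ε ^ 2) := by
  have hsq : (t : ℂ) * (1 + (t : ℂ) ^ 2)⁻¹ = ((t * (1 + t ^ 2)⁻¹ : ℝ) : ℂ) := by push_cast; ring
  rw [Complex.sub_im, hsq, Complex.ofReal_im, sub_zero, Complex.inv_im, Complex.normSq_apply]
  simp only [Complex.sub_re, Complex.sub_im, Complex.add_re, Complex.add_im, Complex.mul_re,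
    Complex.mul_im, Complex.ofReal_re, Complex.ofReal_im, Complex.I_re, Complex.I_im]
  ring

/-- `π` times the Poisson integral of `μ` at `x + iε`. -/
noncomputable def poissonIntegral (μ : Measure ℝ) (x ε : ℝ) : ℝ≥0∞ :=
  ∫⁻ t, ENNReal.ofReal (ε / ((t - x) ^ 2 + ε ^ 2)) ∂μ

theorem im_integral_cauchyKernel {μ : Measure ℝ}
    (h : ∫⁻ t, ENNReal.ofReal ((1 + t ^ 2)⁻¹) ∂μ < ∞) (x : ℝ) {ε : ℝ} (hε : 0 < ε) :
    (∫ t, ((t : ℂ) - (x + ε * Complex.I))⁻¹ - t * (1 + (t : ℂ) ^ 2)⁻¹ ∂μ).im =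
      (poissonIntegral μ x ε).toReal := by
  have hz : 0 < ((x : ℂ) + ε * Complex.I).im := by simpa using hε
  have hint := integral_im (𝕜 := ℂ) (integrable_cauchyKernel h hz)
  simp only [RCLike.im_to_complex, im_cauchyKernel] at hint
  rw [← hint, integral_eq_lintegral_of_nonneg_ae (.of_forall fun t => by positivity)
    (by fun_prop : Measurable _).aestronglyMeasurable, poissonIntegral]

theorem poissonIntegral_lt_top {μ : Measure ℝ}
    (h : ∫⁻ t, ENNReal.ofReal ((1 + t ^ 2)⁻¹) ∂μ < ∞) (x : ℝ) {ε : ℝ} (hε : 0 < ε) :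
    poissonIntegral μ x ε < ∞ := by
  have hz : 0 < ((x : ℂ) + ε * Complex.I).im := by simpa using hε
  have hint := (integrable_cauchyKernel h hz).im
  simp only [RCLike.im_to_complex, im_cauchyKernel] at hint
  exact (hasFiniteIntegral_iff_ofReal (.of_forall fun t => by positivity)).1 hint.2

theorem measure_closedBall_div_le_poissonIntegral (μ : Measure ℝ) (x : ℝ) {ε : ℝ} (hε : 0 < ε) :
    μ (closedBall x ε) / ENNReal.ofReal (2 * ε) ≤ poissonIntegral μ x ε :=
  calc μ (closedBall x ε) / ENNReal.ofReal (2 * ε)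
      = ∫⁻ _ in closedBall x ε, ENNReal.ofReal ((2 * ε)⁻¹) ∂μ := by
        rw [setLIntegral_const, ENNReal.ofReal_inv_of_pos (by positivity), ENNReal.div_eq_inv_mul]
    _ ≤ ∫⁻ t in closedBall x ε, ENNReal.ofReal (ε / ((t - x) ^ 2 + ε ^ 2)) ∂μ := by
        refine setLIntegral_mono' measurableSet_closedBall fun t ht => ?_
        have : (t - x) ^ 2 ≤ ε ^ 2 := sq_le_sq' (abs_le.1 ht).1 (abs_le.1 ht).2
        gcongr
        rw [inv_eq_one_div, div_le_div_iff₀ (by positivity) (by positivity)]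
        nlinarith
    _ ≤ poissonIntegral μ x ε := setLIntegral_le_lintegral _ _

theorem exists_dyadic_closedBall_mem_kernel_le (x t : ℝ) {ε : ℝ} (hε : 0 < ε) :
    ∃ k : ℕ, t ∈ closedBall x (2 ^ k * ε) ∧ ε / ((t - x) ^ 2 + ε ^ 2) ≤ 4 / (4 ^ k * ε) := by
  obtain ⟨n, hn, hn'⟩ := exists_nat_pow_near (le_max_left 1 (|t - x| / ε)) one_lt_two
  refine ⟨n + 1, ?_, ?_⟩
  · rw [mem_closedBall, Real.dist_eq, ← div_le_iff₀ hε]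
    exact (le_max_right _ _).trans hn'.le
  · have hsq : (2 ^ n * ε) ^ 2 ≤ (t - x) ^ 2 + ε ^ 2 := by
      rcases le_max_iff.1 hn with h | h
      · have : (2 ^ n * ε) ^ 2 ≤ ε ^ 2 := by gcongr; simpa using mul_le_mul_of_nonneg_right h hε.le
        nlinarith
      · rw [le_div_iff₀ hε] at h
        have : (2 ^ n * ε) ^ 2 ≤ |t - x| ^ 2 := by gcongr
        nlinarith [sq_abs (t - x)]
    calc ε / ((t - x) ^ 2 + ε ^ 2) ≤ ε / (2 ^ n * ε) ^ 2 := by gcongr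
      _ = 4 / (4 ^ (n + 1) * ε) := by
        rw [show (4 : ℝ) = 2 ^ 2 by norm_num, ← pow_mul]
        field_simp
        ring

theorem poissonIntegral_le_of_measure_closedBall_le {ν : Measure ℝ} {x : ℝ} {C : ℝ≥0∞}
    (h : ∀ r, 0 < r → ν (closedBall x r) ≤ C * ENNReal.ofReal r) {ε : ℝ} (hε : 0 < ε) :
    poissonIntegral ν x ε ≤ 8 * C := by
  set B : ℕ → Set ℝ := fun k => closedBall x (2 ^ k * ε)
  have hpt : ∀ t, ENNReal.ofReal (ε / ((t - x) ^ 2 + ε ^ 2)) ≤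
      ∑' k, (B k).indicator (fun _ => ENNReal.ofReal (4 / (4 ^ k * ε))) t := fun t => by
    obtain ⟨k, hk, hker⟩ := exists_dyadic_closedBall_mem_kernel_le x t hε
    calc ENNReal.ofReal (ε / ((t - x) ^ 2 + ε ^ 2)) ≤ ENNReal.ofReal (4 / (4 ^ k * ε)) :=
          ENNReal.ofReal_le_ofReal hker
      _ = (B k).indicator (fun _ => ENNReal.ofReal (4 / (4 ^ k * ε))) t :=
          (indicator_of_mem hk fun _ => ENNReal.ofReal (4 / (4 ^ k * ε))).symm
      _ ≤ _ := ENNReal.le_tsum k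
  have hterm : ∀ k : ℕ, ENNReal.ofReal (4 / (4 ^ k * ε)) * ν (B k) ≤
      C * ENNReal.ofReal (4 * (1 / 2) ^ k) := fun k => by
    calc ENNReal.ofReal (4 / (4 ^ k * ε)) * ν (B k)
        ≤ ENNReal.ofReal (4 / (4 ^ k * ε)) * (C * ENNReal.ofReal (2 ^ k * ε)) := by
          gcongr; exact h _ (by positivity)
      _ = C * ENNReal.ofReal (4 * (1 / 2) ^ k) := by
          rw [mul_left_comm, ← ENNReal.ofReal_mul (by positivity)]
          congr 2
          rw [show (4 : ℝ) ^ k = 2 ^ k * 2 ^ k by rw [← mul_pow]; norm_num]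
          field_simp
          rw [← mul_pow]
          norm_num
  calc poissonIntegral ν x ε
      ≤ ∫⁻ t, ∑' k, (B k).indicator (fun _ => ENNReal.ofReal (4 / (4 ^ k * ε))) t ∂ν :=
        lintegral_mono hpt
    _ = ∑' k, ENNReal.ofReal (4 / (4 ^ k * ε)) * ν (B k) := by
        rw [lintegral_tsum fun k => (aemeasurable_const.indicator measurableSet_closedBall)]
        simp only [B, lintegral_indicator_const measurableSet_closedBall]
    _ ≤ ∑' k : ℕ, C * ENNReal.ofReal (4 * (1 / 2) ^ k) := ENNReal.tsum_le_tsum hterm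
    _ = 8 * C := by
        rw [ENNReal.tsum_mul_left, ← ENNReal.ofReal_tsum_of_nonneg (fun k => by positivity)
          ((summable_geometric_two).mul_left 4), tsum_mul_left, tsum_geometric_two, mul_comm]
        norm_num

theorem poissonIntegral_restrict_compl_closedBall_le (μ : Measure ℝ) (x : ℝ) {ε : ℝ}
    (hε : 0 < ε) (hε1 : ε ≤ 1) :
    poissonIntegral (μ.restrict (closedBall x 1)ᶜ) x ε ≤
      ENNReal.ofReal (1 + (1 + |x|) ^ 2) * ∫⁻ t, ENNReal.ofReal ((1 + t ^ 2)⁻¹) ∂μ := by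
  have hpt : ∀ t ∈ (closedBall x 1)ᶜ, ENNReal.ofReal (ε / ((t - x) ^ 2 + ε ^ 2)) ≤
      ENNReal.ofReal (1 + (1 + |x|) ^ 2) * ENNReal.ofReal ((1 + t ^ 2)⁻¹) := fun t ht => by
    rw [mem_compl_iff, mem_closedBall, Real.dist_eq, not_le] at ht
    rw [← ENNReal.ofReal_mul (by positivity)]
    gcongr
    have habs : |t| ≤ (1 + |x|) * |t - x| := by
      have := abs_sub_abs_le_abs_sub t x
      nlinarith [abs_nonneg x]
    have hsq : 1 + t ^ 2 ≤ (1 + (1 + |x|) ^ 2) * (t - x) ^ 2 := by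
      have := pow_le_pow_left₀ (abs_nonneg t) habs 2
      rw [mul_pow, sq_abs, sq_abs] at this
      nlinarith [sq_abs (t - x)]
    calc ε / ((t - x) ^ 2 + ε ^ 2) ≤ 1 / (t - x) ^ 2 := by
          rw [div_le_div_iff₀ (by positivity) (by nlinarith [sq_abs (t - x)])]
          nlinarith
      _ ≤ (1 + (1 + |x|) ^ 2) * (1 + t ^ 2)⁻¹ := by
          rw [← div_eq_mul_inv, div_le_div_iff₀ (by nlinarith [sq_abs (t - x)]) (by positivity)]
          linarith
  calc poissonIntegral (μ.restrict (closedBall x 1)ᶜ) x ε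
      ≤ ∫⁻ t in (closedBall x 1)ᶜ,
          ENNReal.ofReal (1 + (1 + |x|) ^ 2) * ENNReal.ofReal ((1 + t ^ 2)⁻¹) ∂μ :=
        setLIntegral_mono' measurableSet_closedBall.compl hpt
    _ ≤ _ := by
        rw [← lintegral_const_mul' _ _ ENNReal.ofReal_ne_top]
        exact setLIntegral_le_lintegral _ _

theorem ae_exists_restrict_measure_closedBall_le (μ : Measure ℝ) [IsLocallyFiniteMeasure μ] :
    ∀ᵐ x, ∃ C ≠ ∞, ∀ r, 0 < r →
      μ.restrict (closedBall x 1) (closedBall x r) ≤ C * ENNReal.ofReal r := by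
  filter_upwards [Besicovitch.ae_tendsto_rnDeriv μ volume, Measure.rnDeriv_lt_top μ volume]
    with x hx hfin
  obtain ⟨δ, hδ, hsmall⟩ := mem_nhdsGT_iff_exists_Ioc_subset.1 <|
    hx.eventually (gt_mem_nhds (ENNReal.lt_add_right hfin.ne one_ne_zero))
  set K := μ.rnDeriv volume x + 1
  set M := μ (closedBall x 1)
  have hδ0 : ENNReal.ofReal δ ≠ 0 := by simpa using hδ
  refine ⟨2 * K + M / ENNReal.ofReal δ, ?_, fun r hr => ?_⟩
  · have : M ≠ ∞ := measure_closedBall_lt_top.ne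
    finiteness
  rcases le_or_gt r δ with hrδ | hδr
  · have hvol : volume (closedBall x r) = 2 * ENNReal.ofReal r := by
      rw [Real.volume_closedBall, ENNReal.ofReal_mul zero_le_two, ENNReal.ofReal_ofNat]
    have hvol0 : volume (closedBall x r) ≠ 0 := by simp [hvol, hr]
    calc μ.restrict (closedBall x 1) (closedBall x r) ≤ μ (closedBall x r) :=
          Measure.restrict_apply_le _ _
      _ ≤ K * volume (closedBall x r) :=
          (ENNReal.div_le_iff hvol0 measure_closedBall_lt_top.ne).1 (hsmall ⟨hr, hrδ⟩).le
      _ ≤ (2 * K + M / ENNReal.ofReal δ) * ENNReal.ofReal r := by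
          rw [hvol, ← mul_assoc, mul_comm K]
          gcongr
          exact le_self_add
  · calc μ.restrict (closedBall x 1) (closedBall x r) ≤ M := by
          simpa using measure_mono (μ := μ.restrict (closedBall x 1)) (subset_univ _)
      _ = M / ENNReal.ofReal δ * ENNReal.ofReal δ :=
          (ENNReal.div_mul_cancel hδ0 ENNReal.ofReal_ne_top).symm
      _ ≤ (2 * K + M / ENNReal.ofReal δ) * ENNReal.ofReal r := by
          gcongr
          exact le_add_self

theorem ae_exists_poissonIntegral_le {μ : Measure ℝ}
    (h : ∫⁻ t, ENNReal.ofReal ((1 + t ^ 2)⁻¹) ∂μ < ∞) :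
    ∀ᵐ x, ∃ B ≠ ∞, ∀ ε ∈ Ioc (0 : ℝ) 1, poissonIntegral μ x ε ≤ B := by
  have := isLocallyFiniteMeasure_of_lintegral_inv_one_add_sq_lt_top h
  filter_upwards [ae_exists_restrict_measure_closedBall_le μ] with x ⟨C, hC, hball⟩
  refine ⟨8 * C + ENNReal.ofReal (1 + (1 + |x|) ^ 2) * ∫⁻ t, ENNReal.ofReal ((1 + t ^ 2)⁻¹) ∂μ,
    by finiteness, fun ε ⟨hε, hε1⟩ => ?_⟩
  rw [poissonIntegral, ← lintegral_add_compl _ measurableSet_closedBall]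
  exact add_le_add (poissonIntegral_le_of_measure_closedBall_le hball hε)
    (poissonIntegral_restrict_compl_closedBall_le μ x hε hε1)

theorem ae_tendsto_poissonIntegral_of_mutuallySingular {μ : Measure ℝ} [IsLocallyFiniteMeasure μ]
    (h : μ ⟂ₘ volume) : ∀ᵐ x ∂μ, Tendsto (poissonIntegral μ x) (𝓝[>] 0) (𝓝 ∞) := by
  filter_upwards [h.ae_tendsto_measure_closedBall_div] with x hx
  refine tendsto_nhds_top_mono hx (eventually_nhdsWithin_of_forall fun ε (hε : 0 < ε) => ?_)
  simp only [Real.volume_closedBall]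
  exact measure_closedBall_div_le_poissonIntegral μ x hε

section Nevanlinna

open Complex

theorem im_eq_mul_add_poissonIntegral {m : ℂ → ℂ} {c d : ℝ} {ω : Measure ℝ}
    (hω : ∫⁻ t, ENNReal.ofReal ((1 + t ^ 2)⁻¹) ∂ω < ∞)
    (hrep : ∀ z : ℂ, 0 < z.im →
      m z = c + d * z + ∫ t : ℝ, ((t : ℂ) - z)⁻¹ - t * (1 + (t : ℂ) ^ 2)⁻¹ ∂ω)
    (x : ℝ) {ε : ℝ} (hε : 0 < ε) :
    (m (x + ε * I)).im = d * ε + (poissonIntegral ω x ε).toReal := by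
  rw [hrep _ (by simpa using hε), add_im, im_integral_cauchyKernel hω x hε]
  simp

theorem ae_tendsto_im_atTop_of_mutuallySingular {m : ℂ → ℂ} {c d : ℝ} {ω μ : Measure ℝ}
    (hω : ∫⁻ t, ENNReal.ofReal ((1 + t ^ 2)⁻¹) ∂ω < ∞)
    (hrep : ∀ z : ℂ, 0 < z.im →
      m z = c + d * z + ∫ t : ℝ, ((t : ℂ) - z)⁻¹ - t * (1 + (t : ℂ) ^ 2)⁻¹ ∂ω)
    (hμω : μ ≤ ω) (hμ : μ ⟂ₘ volume) :
    ∀ᵐ x : ℝ ∂μ, Tendsto (fun ε : ℝ => (m (x + ε * I)).im) (𝓝[>] 0) atTop := by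
  have := Measure.isLocallyFiniteMeasure_of_le
    (H := isLocallyFiniteMeasure_of_lintegral_inv_one_add_sq_lt_top hω) hμω
  have hdε : Tendsto (fun ε : ℝ => d * ε) (𝓝[>] 0) (𝓝 0) := by
    simpa using (continuous_const_mul d).continuousWithinAt.tendsto (x := 0) (s := Ioi 0)
  filter_upwards [ae_tendsto_poissonIntegral_of_mutuallySingular hμ] with x hx
  have hωx : Tendsto (poissonIntegral ω x) (𝓝[>] 0) (𝓝 ∞) :=
    tendsto_nhds_top_mono hx (.of_forall fun ε => lintegral_mono' hμω le_rfl)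
  refine (hdε.add_atTop (ENNReal.tendsto_toReal_atTop ?_ hωx)).congr'
    (eventually_nhdsWithin_of_forall fun ε hε => (im_eq_mul_add_poissonIntegral hω hrep x hε).symm)
  exact eventually_nhdsWithin_of_forall fun ε hε => (poissonIntegral_lt_top hω x hε).ne

theorem volume_setOf_tendsto_im_atTop {m : ℂ → ℂ} {c d : ℝ} {ω : Measure ℝ}
    (hω : ∫⁻ t, ENNReal.ofReal ((1 + t ^ 2)⁻¹) ∂ω < ∞)
    (hrep : ∀ z : ℂ, 0 < z.im →
      m z = c + d * z + ∫ t : ℝ, ((t : ℂ) - z)⁻¹ - t * (1 + (t : ℂ) ^ 2)⁻¹ ∂ω) :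
    volume {x : ℝ | Tendsto (fun ε : ℝ => (m (x + ε * I)).im) (𝓝[>] 0) atTop} = 0 := by
  refine measure_eq_zero_iff_ae_notMem.2 ?_
  filter_upwards [ae_exists_poissonIntegral_le hω] with x ⟨B, hB, hbound⟩ hx
  obtain ⟨ε, hlarge, hε, hε1⟩ := ((hx.eventually_gt_atTop (|d| + B.toReal)).and
    (Ioc_mem_nhdsGT zero_lt_one)).exists
  rw [im_eq_mul_add_poissonIntegral hω hrep x hε] at hlarge
  have hdε : d * ε ≤ |d| := by nlinarith [le_abs_self d, abs_nonneg d]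
  linarith [ENNReal.toReal_mono hB (hbound ε ⟨hε, hε1⟩)]

end Nevanlinna

theorem minimal_support_singular_part_general
    (m : ℂ → ℂ)
    (c d : ℝ) (ω : Measure ℝ)
    (hω : (∫⁻ l : ℝ, ENNReal.ofReal ((1 + l ^ 2)⁻¹) ∂ω) < ⊤)
    (hrep : ∀ z : ℂ, 0 < z.im →
      m z = (c : ℂ) + (d : ℂ) * z +
        ∫ l : ℝ, (((l : ℂ) - z)⁻¹ - (l : ℂ) * (1 + (l : ℂ) ^ 2)⁻¹) ∂ω)
    (ωac ωs : Measure ℝ) (hdecomp : ω = ωac + ωs)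
    (hs : Measure.MutuallySingular ωs volume) :
    ωs {l : ℝ |
        Tendsto (fun ε : ℝ => (m ((l : ℂ) + ε * Complex.I)).im) (𝓝[>] 0) atTop}ᶜ = 0 ∧
      ∀ B : Set ℝ, MeasurableSet B →
        B ⊆ {l : ℝ |
          Tendsto (fun ε : ℝ => (m ((l : ℂ) + ε * Complex.I)).im) (𝓝[>] 0) atTop} →
        ωs B = 0 → volume B = 0 :=
  ⟨ae_tendsto_im_atTop_of_mutuallySingular hω hrep (hdecomp ▸ Measure.le_add_left le_rfl) hs,
    fun _ _ hB _ => measure_mono_null hB (volume_setOf_tendsto_im_atTop hω hrep)⟩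

/-- For a Herglotz function `m` with Nevanlinna representation measure `ω` decomposed as
`ω = ω_ac + ω_s` (`ω_ac ≪ Lebesgue`, `ω_s ⟂ Lebesgue`), the set
`S = {λ : Im m(λ+iε) → +∞ as ε↓0}` is a minimal support of `ω_s` relative to Lebesgue
measure. -/
theorem minimal_support_singular_part
    (m : ℂ → ℂ)
    (hanal : DifferentiableOn ℂ m {z : ℂ | 0 < z.im})
    (hmap : ∀ z : ℂ, 0 < z.im → 0 < (m z).im)
    (c d : ℝ) (ω : Measure ℝ) (hd : 0 ≤ d)
    (hω : (∫⁻ l : ℝ, ENNReal.ofReal ((1 + l ^ 2)⁻¹) ∂ω) < ⊤)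
    (hrep : ∀ z : ℂ, 0 < z.im →
      m z = (c : ℂ) + (d : ℂ) * z +
        ∫ l : ℝ, (((l : ℂ) - z)⁻¹ - (l : ℂ) * (1 + (l : ℂ) ^ 2)⁻¹) ∂ω)
    (ωac ωs : Measure ℝ) (hdecomp : ω = ωac + ωs)
    (hac : ωac ≪ volume) (hs : Measure.MutuallySingular ωs volume) :
    ωs {l : ℝ |
        Tendsto (fun ε : ℝ => (m ((l : ℂ) + ε * Complex.I)).im) (𝓝[>] 0) atTop}ᶜ = 0 ∧
      ∀ B : Set ℝ, MeasurableSet B →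
        B ⊆ {l : ℝ |
          Tendsto (fun ε : ℝ => (m ((l : ℂ) + ε * Complex.I)).im) (𝓝[>] 0) atTop} →
        ωs B = 0 → volume B = 0 :=
  minimal_support_singular_part_general m c d ω hω hrep ωac ωs hdecomp hs
end
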